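/- arXiv:1612.06521 — 12 statements merged into one kernel-verified Lean document; each statement's English description precedes it below -/
import Mathlib

section
/- Let G be a finite group whose Sylow 2-subgroups are cyclic. Then the set N = {g ∈ G : g has odd order} is a normal subgroup of G, and every Sylow 2-subgroup P of G is a complement to N, i.e. N ∩ P = {1} and NP = G (so that G is an internal semidirect product N ⋊ P). -/
/-!
A cyclic 2-group `P` is abelian and `Aut P` is a 2-group, while `N_G(P) / C_G(P)` embeds in
`Aut P` and has odd order (it divides the index of `P`); hence `N_G(P) = C_G(P)`, and Burnside's
transfer theorem yields a normal complement `N` of `P`. As `G ⧸ N ≃ P` is a 2-group and `|N|` is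
odd, `N` is exactly the set of elements of odd order, and every Sylow 2-subgroup, having the same
order as `P`, is a complement of `N` by coprimality.
-/

open Subgroup

theorem Sylow.normalizer_le_centralizer_of_isCyclic_two {G : Type*} [Group G] [Finite G]
    (P : Sylow 2 G) (hP : IsCyclic P) : normalizer P ≤ centralizer (P : Set G) := by
  by_cases h2 : 2 ∣ Nat.card G
  · exact hP.normalizer_le_centralizer ((Nat.minFac_eq_two_iff _).mpr h2)
  · have hbot : (P : Subgroup G) = ⊥ := card_eq_one.mp <|
      P.2.card_eq_or_dvd.resolve_right fun h => h2 (h.trans (card_subgroup_dvd_card _))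
    intro x _ y hy
    obtain rfl : y = 1 := mem_bot.mp (hbot ▸ hy)
    simp

theorem Subgroup.IsComplement'.mem_iff_not_dvd_orderOf {G : Type*} [Group G] [Finite G]
    {p : ℕ} [Fact p.Prime] {N : Subgroup G} [N.Normal] {P : Sylow p G}
    (h : N.IsComplement' P) (g : G) : g ∈ N ↔ ¬ p ∣ orderOf g := by
  refine ⟨fun hg hp => (h.index_eq_card ▸ P.not_dvd_index) (hp.trans (N.orderOf_dvd_natCard hg)),
    fun hg => ?_⟩
  obtain ⟨n, hn⟩ := P.2.exists_card_eq
  have hquot : IsPGroup p (G ⧸ N) := .of_card (h.symm.index_eq_card.trans hn)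
  have hcop := hquot.orderOf_coprime ((Nat.Prime.coprime_iff_not_dvd Fact.out).mpr hg) g
  rw [← QuotientGroup.eq_one_iff, ← orderOf_eq_one_iff]
  exact hcop.eq_one_of_dvd (orderOf_map_dvd (QuotientGroup.mk' N) g)

theorem Subgroup.IsComplement'.to_sylow {G : Type*} [Group G] [Finite G]
    {p : ℕ} [Fact p.Prime] {N : Subgroup G} {P : Sylow p G} (h : N.IsComplement' P)
    (Q : Sylow p G) : N.IsComplement' Q := by
  have hcard : Nat.card Q = Nat.card P := by
    rw [P.card_eq_multiplicity, Q.card_eq_multiplicity]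
  obtain ⟨n, hn⟩ := Q.2.exists_card_eq
  refine isComplement'_of_coprime (hcard ▸ h.card_mul_card) ?_
  rw [hn]
  exact .pow_right n ((Nat.Prime.coprime_iff_not_dvd Fact.out).mpr
    (h.index_eq_card ▸ P.not_dvd_index)).symm

/-- If the Sylow 2-subgroups of a finite group `G` are cyclic, then the set of
elements of odd order is a normal subgroup `N` of `G`, and every Sylow
2-subgroup `P` is a complement to `N` (i.e. `N ∩ P = 1` and `NP = G`). -/
theorem sylow_two_cyclic_normal_complement (G : Type*) [Group G] [Finite G]
    (hG : ∀ P : Sylow 2 G, IsCyclic (P : Subgroup G)) :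
    ∃ N : Subgroup G, N.Normal ∧ (∀ g : G, g ∈ N ↔ Odd (orderOf g)) ∧
      ∀ P : Sylow 2 G, N.IsComplement' (P : Subgroup G) := by
  obtain ⟨P⟩ : Nonempty (Sylow 2 G) := inferInstance
  have hcomp := MonoidHom.ker_transferSylow_isComplement' P
    (P.normalizer_le_centralizer_of_isCyclic_two (hG P))
  refine ⟨_, inferInstance, fun g => ?_, hcomp.to_sylow⟩
  rw [hcomp.mem_iff_not_dvd_orderOf, ← even_iff_two_dvd, Nat.not_even_iff_odd]
end

section
/- Let G be a finite group whose Sylow 2-subgroup P is cyclic. Then there exists a surjective group homomorphism from G onto P; in particular, G has a cyclic quotient whose order equals the 2-part of |G|. -/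
/-!
Since `P` is cyclic, `Aut P` has order `φ(|P|)`, a power of `2`, while `N(P)/C(P)` embeds in
`Aut P` and has odd order, being a quotient of `N(P)/P`. Hence `N(P) ≤ C(P)`, and Burnside's
transfer `G → P` restricts on `P` to `x ↦ x ^ [G : P]`, a bijection because `[G : P]` is odd.
-/

open Subgroup

theorem MonoidHom.transferSylow_surjective {G : Type*} [Group G] {p : ℕ} [Fact p.Prime]
    [Finite (Sylow p G)] (P : Sylow p G) (hP : normalizer P ≤ centralizer (P : Set G))
    [P.FiniteIndex] : Function.Surjective (transferSylow P hP) := by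
  have hrestrict : Function.Surjective ((transferSylow P hP).domRestrict (P : Subgroup G)) :=
    (transferSylow_domRestrict_eq_pow P hP).symm ▸ (P.2.powEquiv' P.not_dvd_index).surjective
  exact Function.Surjective.of_comp hrestrict

/-- If a Sylow 2-subgroup `P` of a finite group `G` is cyclic, then there is a
surjective homomorphism from `G` onto `P`; in particular `G` has a cyclic
quotient whose order is the 2-part of `|G|`. -/
theorem surjective_onto_cyclic_sylow_two (G : Type*) [Group G] [Finite G]
    (P : Sylow 2 G) (hP : IsCyclic (P : Subgroup G)) :
    (∃ f : G →* (P : Subgroup G), Function.Surjective f) ∧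
      Nat.card (P : Subgroup G) = 2 ^ (Nat.card G).factorization 2 :=
  ⟨⟨_, MonoidHom.transferSylow_surjective P (P.normalizer_le_centralizer_of_isCyclic_two hP)⟩,
    P.card_eq_multiplicity⟩
end

section
/- Every split metacyclic finite group G of even order has a cyclic normal subgroup N and a cyclic subgroup H of even order with N ∩ H = {1} and NH = G. -/
/-!
Write `G = N ⋊ H` with `|H|` odd (otherwise there is nothing to do), so that `|N|` is even, and
split the cyclic group `N = P × Q` into its Sylow 2-subgroup `P` of order `2ᵏ` and its odd part `Q`.
Both are normal in `G`, being subgroups of a cyclic normal subgroup. The odd-order group `H` acts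
on `P` through `Aut P`, whose order `φ(2ᵏ) = 2ᵏ⁻¹` is a power of two, so `H` centralizes `P`.
Hence `PH` is cyclic of even order `2ᵏ|H|`, and `G = Q ⋊ PH`.
-/

open Subgroup

section

variable {G : Type*} [Group G]

theorem Commute.mem_zpowers_mul_of_coprime {x y : G} (hxy : Commute x y)
    (hco : (orderOf x).Coprime (orderOf y)) : x ∈ zpowers (x * y) := by
  obtain ⟨m, hm⟩ := exists_pow_eq_self_of_coprime hco.symm
  convert pow_mem (pow_mem (mem_zpowers (x * y)) (orderOf y)) m using 1
  rw [hxy.mul_pow, pow_orderOf_eq_one, mul_one, hm]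

theorem Commute.zpowers_mul_eq_sup {x y : G} (hxy : Commute x y)
    (hco : (orderOf x).Coprime (orderOf y)) : zpowers (x * y) = zpowers x ⊔ zpowers y := by
  refine le_antisymm (zpowers_le.mpr (mul_mem_sup (mem_zpowers x) (mem_zpowers y)))
    (sup_le (zpowers_le.mpr (hxy.mem_zpowers_mul_of_coprime hco)) (zpowers_le.mpr ?_))
  rw [hxy.eq]
  exact hxy.symm.mem_zpowers_mul_of_coprime hco.symm

theorem zpowers_pow_sup_zpowers_pow {g : G} {a b : ℕ}
    (hab : a.Coprime b) (hg : orderOf g = a * b) :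
    zpowers (g ^ a) ⊔ zpowers (g ^ b) = zpowers g := by
  refine le_antisymm (sup_le (zpowers_le.mpr (pow_mem (mem_zpowers g) a))
    (zpowers_le.mpr (pow_mem (mem_zpowers g) b))) (zpowers_le.mpr ?_)
  -- `g` is a power of `g ^ a * g ^ b = g ^ (a + b)`, as `a + b` is prime to `a * b`.
  have hco : (a + b).Coprime (orderOf g) := by
    rw [hg]
    exact Nat.Coprime.mul_right (by simpa using hab.symm) (by simpa using hab)
  obtain ⟨n, hn⟩ := exists_pow_eq_self_of_coprime hco
  convert pow_mem (mul_mem_sup (mem_zpowers (g ^ a)) (mem_zpowers (g ^ b))) n using 1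
  rw [← pow_add, hn]

theorem orderOf_pow_of_orderOf_eq_mul {g : G} {a b : ℕ} (ha : a ≠ 0)
    (hg : orderOf g = a * b) : orderOf (g ^ a) = b := by
  rw [orderOf_pow_of_dvd ha (hg ▸ dvd_mul_right a b), hg,
    Nat.mul_div_cancel_left b (Nat.pos_of_ne_zero ha)]

namespace Subgroup

theorem card_mul_card_of_inf_eq_bot_of_sup_eq_top {N H : Subgroup G} [N.Normal]
    (hinf : N ⊓ H = ⊥) (hsup : N ⊔ H = ⊤) : Nat.card N * Nat.card H = Nat.card G := by
  refine (isComplement'_of_disjoint_and_mul_eq_univ (disjoint_iff.mpr hinf) ?_).card_mul_card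
  rw [← normal_mul, hsup, coe_top]

theorem sup_inf_assoc_of_le_of_normal {P N : Subgroup G} [P.Normal] (H : Subgroup G)
    (hPN : P ≤ N) : (P ⊔ H) ⊓ N = P ⊔ H ⊓ N := by
  apply SetLike.coe_injective
  rw [coe_inf, normal_mul, normal_mul, mul_inf_assoc _ _ _ hPN]

theorem inf_sup_eq_bot_of_le_of_inf_eq_bot {N P Q H : Subgroup G} [P.Normal] (hPN : P ≤ N)
    (hQN : Q ≤ N) (hPQ : P ⊓ Q = ⊥) (hHN : H ⊓ N = ⊥) : Q ⊓ (P ⊔ H) = ⊥ := by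
  have hPH : (P ⊔ H) ⊓ N = P := by rw [sup_inf_assoc_of_le_of_normal H hPN, hHN, sup_bot_eq]
  calc Q ⊓ (P ⊔ H) = Q ⊓ ((P ⊔ H) ⊓ N) := by
        rw [← inf_assoc, inf_right_comm, inf_eq_left.mpr hQN]
    _ = ⊥ := by rw [hPH, inf_comm, hPQ]

theorem exists_zpow_eq_conj_of_isCyclic (N : Subgroup G) [N.Normal] [IsCyclic N] (x : G) :
    ∃ s : ℤ, ∀ z ∈ N, x * z * x⁻¹ = z ^ s := by
  obtain ⟨s, hs⟩ := (MulAut.conjNormal (H := N) x).toMonoidHom.map_cyclic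
  exact ⟨s, fun z hz ↦ by
    simpa [MulAut.conjNormal_apply] using congrArg Subtype.val (hs ⟨z, hz⟩)⟩

theorem normal_zpowers_of_mem {N : Subgroup G} [N.Normal] [IsCyclic N] {z : G} (hz : z ∈ N) :
    (zpowers z).Normal where
  conj_mem a ha x := by
    obtain ⟨s, hs⟩ := N.exists_zpow_eq_conj_of_isCyclic x
    rw [hs a (zpowers_le.mpr hz ha)]
    exact zpow_mem ha s

theorem mem_centralizer_of_coprime_totient {P : Subgroup G} [P.Normal] [IsCyclic P] [Finite P]
    {x : G} (hx : (orderOf x).Coprime (Nat.card P).totient) : x ∈ centralizer P := by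
  have hdvd : orderOf (MulAut.conjNormal (H := P) x) ∣ (Nat.card P).totient :=
    IsCyclic.card_mulAut P ▸ _root_.orderOf_dvd_natCard _
  have hconj : MulAut.conjNormal (H := P) x = 1 :=
    orderOf_eq_one_iff.mp (Nat.eq_one_of_dvd_coprimes hx (orderOf_map_dvd _ x) hdvd)
  rw [mem_centralizer_iff]
  intro p hp
  have hfix := congrArg Subtype.val (DFunLike.congr_fun hconj ⟨p, hp⟩)
  rw [MulAut.conjNormal_apply, MulAut.one_apply] at hfix
  exact (mul_inv_eq_iff_eq_mul.mp hfix).symm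

end Subgroup

theorem commute_of_orderOf_eq_two_pow {p y : G} [(zpowers p).Normal] {k : ℕ}
    (hp : orderOf p = 2 ^ k) (hy : Odd (orderOf y)) : Commute p y := by
  have : Finite (zpowers p) := Nat.finite_of_card_ne_zero (by simp [Nat.card_zpowers, hp])
  refine mem_centralizer_iff.mp (mem_centralizer_of_coprime_totient (x := y) ?_) p (mem_zpowers p)
  rw [Nat.card_zpowers, hp]
  cases k with
  | zero => simp
  | succ k =>
    rw [Nat.totient_prime_pow_succ Nat.prime_two]
    exact ((Nat.coprime_two_right.mpr hy).pow_right k).mul_right (by simp)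

theorem exists_even_cyclic_complement {g y : G} [(zpowers g).Normal] {k m : ℕ}
    (hk : k ≠ 0) (hm : Odd m) (hg : orderOf g = 2 ^ k * m) (hy : Odd (orderOf y))
    (hinf : zpowers g ⊓ zpowers y = ⊥) (hsup : zpowers g ⊔ zpowers y = ⊤) :
    ∃ (N H : Subgroup G), N.Normal ∧ IsCyclic N ∧ IsCyclic H ∧
      Even (Nat.card H) ∧ N ⊓ H = ⊥ ∧ N ⊔ H = ⊤ := by
  have hg' : orderOf g = m * 2 ^ k := hg.trans (mul_comm _ _)
  set p := g ^ m
  set q := g ^ 2 ^ k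
  have hp : orderOf p = 2 ^ k := orderOf_pow_of_orderOf_eq_mul hm.pos.ne' hg'
  have hq : orderOf q = m := orderOf_pow_of_orderOf_eq_mul (pow_ne_zero k two_ne_zero) hg
  have hpN : p ∈ zpowers g := pow_mem (mem_zpowers g) m
  have := normal_zpowers_of_mem hpN
  have hpy : Commute p y := commute_of_orderOf_eq_two_pow hp hy
  have hpy_co : (orderOf p).Coprime (orderOf y) := hp ▸ (Nat.coprime_two_left.mpr hy).pow_left k
  have hpq : zpowers p ⊓ zpowers q = ⊥ := by
    refine disjoint_iff.mp (disjoint_of_coprime_natCard ?_)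
    rw [Nat.card_zpowers, Nat.card_zpowers, hp, hq]
    exact (Nat.coprime_two_left.mpr hm).pow_left k
  refine ⟨zpowers q, zpowers (p * y), normal_zpowers_of_mem (pow_mem (mem_zpowers g) _),
    inferInstance, inferInstance, ?_, ?_, ?_⟩
  · rw [Nat.card_zpowers, hpy.orderOf_mul_eq_mul_orderOf_of_coprime hpy_co, hp]
    exact (Nat.even_pow.mpr ⟨even_two, hk⟩).mul_right _
  · rw [hpy.zpowers_mul_eq_sup hpy_co]
    exact inf_sup_eq_bot_of_le_of_inf_eq_bot (zpowers_le.mpr hpN)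
      (zpowers_le.mpr (pow_mem (mem_zpowers g) _)) hpq (by rw [inf_comm, hinf])
  · rw [hpy.zpowers_mul_eq_sup hpy_co, ← sup_assoc, sup_comm (zpowers q),
      zpowers_pow_sup_zpowers_pow ((Nat.coprime_two_right.mpr hm).pow_right k) hg', hsup]

end

/-- Every split metacyclic finite group of even order has a cyclic normal
subgroup `N` and a cyclic subgroup `H` of even order with `N ∩ H = 1` and
`NH = G`. -/
theorem split_metacyclic_even_order_has_even_complement (G : Type*) [Group G] [Finite G]
    (hEven : Even (Nat.card G))
    (hMeta : ∃ (N H : Subgroup G), N.Normal ∧ IsCyclic N ∧ IsCyclic H ∧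
      N ⊓ H = ⊥ ∧ N ⊔ H = ⊤) :
    ∃ (N H : Subgroup G), N.Normal ∧ IsCyclic N ∧ IsCyclic H ∧
      Even (Nat.card H) ∧ N ⊓ H = ⊥ ∧ N ⊔ H = ⊤ := by
  obtain ⟨N, H, hN, hNcyc, hHcyc, hinf, hsup⟩ := hMeta
  by_cases hHeven : Even (Nat.card H)
  · exact ⟨N, H, hN, hNcyc, hHcyc, hHeven, hinf, hsup⟩
  obtain ⟨g, rfl⟩ := N.isCyclic_iff_exists_zpowers_eq_top.mp hNcyc
  obtain ⟨y, rfl⟩ := H.isCyclic_iff_exists_zpowers_eq_top.mp hHcyc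
  rw [Nat.not_even_iff_odd, Nat.card_zpowers] at hHeven
  obtain ⟨k, m, hm, hg⟩ := Nat.exists_eq_two_pow_mul_odd (orderOf_pos g).ne'
  have hk : k ≠ 0 := by
    rintro rfl
    rw [← card_mul_card_of_inf_eq_bot_of_sup_eq_top hinf hsup, Nat.card_zpowers,
      Nat.card_zpowers, hg, pow_zero, one_mul, ← Nat.not_odd_iff_even] at hEven
    exact hEven (hm.mul hHeven)
  exact exists_even_cyclic_complement hk hm hg hHeven hinf hsup
end

section
/- Let h ≥ 0 and r ≥ 0 be integers and m_1, …, m_r integers with m_i ≥ 2 for all i. If 0 < μ(h; m_1,…,m_r) < 1/2, then h = 0 and r ∈ {3, 4}. -/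
/-- The signature measure `μ(h; m₁,…,m_r) = 2h - 2 + ∑ᵢ (1 - 1/mᵢ)`. -/
def mu (h r : ℕ) (m : Fin r → ℕ) : ℚ :=
  2 * h - 2 + ∑ i, (1 - ((m i : ℚ))⁻¹)

/-- If `0 < μ(h; m₁,…,m_r) < 1/2`, then `h = 0` and `r ∈ {3, 4}`. -/
theorem quotient_genus_zero_of_mu_lt_half (h r : ℕ) (m : Fin r → ℕ)
    (hm : ∀ i, 2 ≤ m i) (h0 : 0 < mu h r m) (h1 : mu h r m < 1 / 2) :
    h = 0 ∧ (r = 3 ∨ r = 4) := by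
  have hterm : ∀ i, (1/2 : ℚ) ≤ 1 - ((m i : ℚ))⁻¹ := by
    intro i
    have h2 : (2:ℚ) ≤ (m i : ℚ) := by exact_mod_cast hm i
    have hinv : ((m i : ℚ))⁻¹ ≤ (2:ℚ)⁻¹ := by
      apply inv_anti₀ (by norm_num) h2
    have : ((m i : ℚ))⁻¹ ≤ 1/2 := by linarith [hinv]
    linarith
  have hterm1 : ∀ i, 1 - ((m i : ℚ))⁻¹ ≤ 1 := by
    intro i
    have : (0:ℚ) ≤ ((m i : ℚ))⁻¹ := by positivity
    linarith
  have hlo : (r:ℚ)/2 ≤ ∑ i, (1 - ((m i : ℚ))⁻¹) := by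
    have := Finset.sum_le_sum (fun i (_ : i ∈ Finset.univ) => hterm i)
    simpa [Finset.sum_const, Finset.card_univ, mul_comm, div_eq_mul_inv] using this
  have hhi : ∑ i, (1 - ((m i : ℚ))⁻¹) ≤ (r:ℚ) := by
    have := Finset.sum_le_sum (fun i (_ : i ∈ Finset.univ) => hterm1 i)
    simpa [Finset.sum_const, Finset.card_univ] using this
  unfold mu at h0 h1
  have hh0 : h = 0 := by
    by_contra hne
    have h1h : 1 ≤ h := Nat.one_le_iff_ne_zero.mpr hne
    have h1q : (1:ℚ) ≤ (h:ℚ) := by exact_mod_cast h1h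
    have hr1 : (r:ℚ) < 1 := by linarith
    have hr0 : r = 0 := by exact_mod_cast Nat.lt_one_iff.mp (by exact_mod_cast hr1)
    subst hr0
    simp only [Finset.univ_eq_empty, Finset.sum_empty, add_zero] at h0 h1
    have : (1:ℚ) < (h:ℚ) := by linarith
    have h2h : 2 ≤ h := by exact_mod_cast this
    have : (2:ℚ) ≤ (h:ℚ) := by exact_mod_cast h2h
    linarith
  subst hh0
  refine ⟨rfl, ?_⟩
  simp only [Nat.cast_zero, mul_zero, zero_sub] at h0 h1
  have h3 : (2:ℚ) < (r:ℚ) := by linarith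
  have h5 : (r:ℚ) < 5 := by linarith
  have h3' : 2 < r := by exact_mod_cast h3
  have h5' : r < 5 := by exact_mod_cast h5
  omega
end

section
/- Let h ≥ 0 and r ≥ 0 be integers and m_1, …, m_r integers with m_i ≥ 2 for all i. If 0 < μ(h; m_1,…,m_r) < 1/4, then h = 0 and either r = 3, or r = 4 and the multiset {m_1, m_2, m_3, m_4} equals {2, 2, 2, 3} (in which case μ = 1/6). -/
/-!
Every term `1 - 1/mᵢ` lies in `[1/2, 1]`, so `μ < 1/4` forces `8h + 2r < 9` and `μ > 0` forces
`2h + r > 2`; hence `h = 0` and `r ∈ {3, 4}`. For `r = 4` a period `mᵢ ≥ 4` alone would give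
`μ ≥ 1/4`, so all periods are `2` or `3`, and if `q` of them equal `3` then `μ = q/6`, forcing `q = 1`.
-/

theorem Multiset.eq_replicate_add_replicate_of_forall_mem {α : Type*} [DecidableEq α]
    {s : Multiset α} {a b : α} (hab : a ≠ b) (hs : ∀ x ∈ s, x = a ∨ x = b) :
    s = replicate (count a s) a + replicate (count b s) b := by
  rw [← filter_eq', ← filter_eq']
  conv_lhs => rw [← filter_add_not (· = a) s]
  congr 1
  refine filter_congr fun x hx => ?_
  rcases hs x hx with rfl | rfl <;> simp [hab, hab.symm]

lemma half_le_one_sub_inv {n : ℕ} (hn : 2 ≤ n) : (1 / 2 : ℚ) ≤ 1 - (n : ℚ)⁻¹ := by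
  have : (n : ℚ)⁻¹ ≤ 2⁻¹ := inv_anti₀ (by norm_num) (by exact_mod_cast hn)
  linarith

lemma one_sub_inv_le_one (n : ℕ) : 1 - (n : ℚ)⁻¹ ≤ 1 :=
  sub_le_self _ (by positivity)

lemma mu_eq_add_sum_sub_half (h r : ℕ) (m : Fin r → ℕ) :
    mu h r m = 2 * h - 2 + r / 2 + ∑ i, ((1 - (m i : ℚ)⁻¹) - 1 / 2) := by
  simp only [mu, Finset.sum_sub_distrib, Finset.sum_const, Finset.card_univ, Fintype.card_fin,
    nsmul_eq_mul]
  ring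

lemma mu_eq_sum_map_periods (h r : ℕ) (m : Fin r → ℕ) :
    mu h r m =
      2 * h - 2 + ((Multiset.map m Finset.univ.val).map fun n : ℕ => 1 - (n : ℚ)⁻¹).sum := by
  rw [Multiset.map_map]
  rfl

section

variable {h r : ℕ} {m : Fin r → ℕ}

lemma mu_le_add_length : mu h r m ≤ 2 * h - 2 + r := by
  have := Finset.sum_le_sum fun i (_ : i ∈ Finset.univ) => one_sub_inv_le_one (m i)
  simp only [Finset.sum_const, Finset.card_univ, Fintype.card_fin, nsmul_eq_mul, mul_one] at this
  unfold mu
  linarith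

lemma add_half_length_le_mu (hm : ∀ i, 2 ≤ m i) : 2 * h - 2 + r / 2 ≤ mu h r m := by
  rw [mu_eq_add_sum_sub_half]
  have := Finset.sum_nonneg fun j (_ : j ∈ Finset.univ) =>
    sub_nonneg.2 (half_le_one_sub_inv (hm j))
  linarith

lemma add_one_sub_inv_period_le_mu (hm : ∀ i, 2 ≤ m i) (i : Fin r) :
    2 * h - 2 + r / 2 + ((1 - (m i : ℚ)⁻¹) - 1 / 2) ≤ mu h r m := by
  rw [mu_eq_add_sum_sub_half]
  gcongr
  exact Finset.single_le_sum (fun j _ => sub_nonneg.2 (half_le_one_sub_inv (hm j)))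
    (Finset.mem_univ i)

lemma eq_zero_and_eq_three_or_four_of_mu_lt_quarter (hm : ∀ i, 2 ≤ m i)
    (h0 : 0 < mu h r m) (h1 : mu h r m < 1 / 4) : h = 0 ∧ (r = 3 ∨ r = 4) := by
  have hlow : (8 * h + 2 * r : ℚ) < 9 := by linarith [add_half_length_le_mu (h := h) hm]
  have hup : (2 : ℚ) < 2 * h + r := by linarith [mu_le_add_length (h := h) (m := m)]
  norm_cast at hlow hup
  omega

end

lemma periods_eq_of_mu_zero_four_lt_quarter {m : Fin 4 → ℕ} (hm : ∀ i, 2 ≤ m i)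
    (h0 : 0 < mu 0 4 m) (h1 : mu 0 4 m < 1 / 4) :
    Multiset.map m Finset.univ.val = {2, 2, 2, 3} ∧ mu 0 4 m = 1 / 6 := by
  have hm3 : ∀ i, m i ≤ 3 := by
    intro i
    by_contra! hi
    have : (m i : ℚ)⁻¹ ≤ 4⁻¹ := inv_anti₀ (by norm_num) (by exact_mod_cast hi)
    linarith [add_one_sub_inv_period_le_mu (h := 0) hm i]
  obtain ⟨p, q, hs⟩ : ∃ p q, Multiset.map m Finset.univ.val =
      .replicate p 2 + .replicate q 3 := by
    refine ⟨_, _, Multiset.eq_replicate_add_replicate_of_forall_mem (by norm_num) fun x hx => ?_⟩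
    obtain ⟨i, -, rfl⟩ := Multiset.mem_map.1 hx
    have := hm i
    have := hm3 i
    omega
  have hpq : p + q = 4 := by
    simpa using (congrArg Multiset.card hs).symm
  have hmu : mu 0 4 m = q / 6 := by
    rw [mu_eq_sum_map_periods, hs]
    have hpq' : (p + q : ℚ) = 4 := by exact_mod_cast hpq
    simp only [Multiset.map_add, Multiset.map_replicate, Multiset.sum_add,
      Multiset.sum_replicate, nsmul_eq_mul]
    linear_combination hpq' / 2
  obtain rfl : q = 1 := by
    have hq0 : (0 : ℚ) < q := by linarith
    have hq2 : (q : ℚ) < 2 := by linarith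
    norm_cast at hq0 hq2
    omega
  obtain rfl : p = 3 := by omega
  exact ⟨hs, hmu.trans (by norm_num)⟩

/-- If `0 < μ(h; m₁,…,m_r) < 1/4`, then `h = 0` and either `r = 3`, or `r = 4`
and the multiset of periods is `{2,2,2,3}`, in which case `μ = 1/6`. -/
theorem mu_lt_quarter (h r : ℕ) (m : Fin r → ℕ)
    (hm : ∀ i, 2 ≤ m i) (h0 : 0 < mu h r m) (h1 : mu h r m < 1 / 4) :
    h = 0 ∧ (r = 3 ∨ (r = 4 ∧
      Multiset.map m Finset.univ.val = ({2, 2, 2, 3} : Multiset ℕ) ∧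
      mu h r m = 1 / 6)) := by
  obtain ⟨rfl, rfl | rfl⟩ := eq_zero_and_eq_three_or_four_of_mu_lt_quarter hm h0 h1
  · exact ⟨rfl, Or.inl rfl⟩
  · exact ⟨rfl, Or.inr ⟨rfl, periods_eq_of_mu_zero_four_lt_quarter hm h0 h1⟩⟩
end

section
/- Let q be a prime power (q = p^k with p prime, k ≥ 1) and let Γ = Γ(0; m_1,…,m_r). If there exists a surjective group homomorphism from Γ onto the cyclic group ℤ/qℤ, then at least two of the periods are divisible by q, i.e., there exist indices i ≠ j with q ∣ m_i and q ∣ m_j. -/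
/-- The relations of the polygonal group
`Γ(0; m₁,…,m_r) = ⟨x₁,…,x_r ∣ x₁^{m₁} = ⋯ = x_r^{m_r} = x₁x₂⋯x_r = 1⟩`. -/
def polygonalRels (r : ℕ) (m : Fin r → ℕ) : Set (FreeGroup (Fin r)) :=
  {w | ∃ i, w = FreeGroup.of i ^ m i} ∪ {(List.ofFn fun i => FreeGroup.of i).prod}

/-- The polygonal group `Γ(0; m₁,…,m_r)`. -/
abbrev PolygonalGroup (r : ℕ) (m : Fin r → ℕ) : Type :=
  PresentedGroup (polygonalRels r m)

/-
Write `aᵢ ∈ ℤ/qℤ` for the image of the generator `xᵢ`. Since `ℤ/p^kℤ` is a local ring and the `aᵢ`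
generate it, some `aᵢ` is a unit: otherwise all of them, hence the whole image, would lie in the
maximal ideal. The long relation gives `∑ aᵢ = 0`, so a single unit among the `aᵢ` would be minus
a sum of non-units; hence there is a second one. Finally `mᵢ aᵢ = 0` with `aᵢ` a unit forces
`q ∣ mᵢ`.
-/

theorem ZMod.isLocalRing_prime_pow {p k : ℕ} (hp : p.Prime) (hk : k ≠ 0) :
    IsLocalRing (ZMod (p ^ k)) := by
  have : NeZero (p ^ k) := ⟨pow_ne_zero k hp.ne_zero⟩
  have : Nontrivial (ZMod (p ^ k)) :=
    ZMod.nontrivial_iff.mpr (Nat.one_lt_pow hk hp.one_lt).ne'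
  refine IsLocalRing.of_nonunits_add fun a b ha hb => ?_
  obtain ⟨a, rfl⟩ := ZMod.natCast_zmod_surjective a
  obtain ⟨b, rfl⟩ := ZMod.natCast_zmod_surjective b
  simp only [mem_nonunits_iff, ← Nat.cast_add,
    ZMod.isUnit_natCast_iff_not_dvd_pow hp (Nat.pos_of_ne_zero hk), not_not] at ha hb ⊢
  exact dvd_add ha hb

namespace IsLocalRing

variable {R : Type*} [CommRing R] [IsLocalRing R]

theorem exists_ne_isUnit_of_sum_eq_zero {ι : Type*} [Fintype ι] [DecidableEq ι] {a : ι → R}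
    (hsum : ∑ j, a j = 0) {i : ι} (hi : IsUnit (a i)) : ∃ j ≠ i, IsUnit (a j) := by
  have hrest : ∑ j ∈ Finset.univ.erase i, a j = -a i := by
    rw [eq_neg_iff_add_eq_zero, add_comm, Finset.add_sum_erase _ _ (Finset.mem_univ i), hsum]
  obtain ⟨j, hj, hunit⟩ := exists_of_isUnit_sum (hrest ▸ hi.neg)
  exact ⟨j, Finset.ne_of_mem_erase hj, hunit⟩

theorem exists_isUnit_of_surjective {α : Type*} {rels : Set (FreeGroup α)}
    {f : PresentedGroup rels →* Multiplicative R} (hf : Function.Surjective f) :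
    ∃ i, IsUnit (f (PresentedGroup.of i)).toAdd := by
  by_contra! h
  let g := (AddMonoidHom.toMultiplicative (residue R).toAddMonoidHom).comp f
  have hg : g = 1 := PresentedGroup.ext fun i =>
    congrArg Multiplicative.ofAdd ((residue_eq_zero_iff _).mpr (h i))
  obtain ⟨x, hx⟩ := hf (Multiplicative.ofAdd 1)
  simpa [g, hx] using DFunLike.congr_fun hg x

end IsLocalRing

namespace PolygonalGroup

variable {r : ℕ} {m : Fin r → ℕ}

theorem of_pow_eq_one (i : Fin r) : (PresentedGroup.of i : PolygonalGroup r m) ^ m i = 1 := by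
  rw [PresentedGroup.of, ← map_pow]
  exact PresentedGroup.one_of_mem (Or.inl ⟨i, rfl⟩)

theorem prod_ofFn_of : (List.ofFn fun i => (PresentedGroup.of i : PolygonalGroup r m)).prod = 1 := by
  have : (List.ofFn fun i => (PresentedGroup.of i : PolygonalGroup r m)) =
      (List.ofFn fun i => FreeGroup.of i).map (PresentedGroup.mk (polygonalRels r m)) :=
    List.map_ofFn.symm
  rw [this, ← map_list_prod]
  exact PresentedGroup.one_of_mem (Or.inr rfl)

variable {A : Type*} [AddCommGroup A] (f : PolygonalGroup r m →* Multiplicative A)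

theorem nsmul_toAdd_map_of (i : Fin r) : m i • (f (PresentedGroup.of i)).toAdd = 0 := by
  rw [← toAdd_pow, ← map_pow, of_pow_eq_one, map_one, toAdd_one]

theorem sum_toAdd_map_of : ∑ i, (f (PresentedGroup.of i)).toAdd = 0 := by
  have : (List.ofFn fun i => f (PresentedGroup.of i)) =
      (List.ofFn fun i => (PresentedGroup.of i : PolygonalGroup r m)).map f :=
    List.map_ofFn.symm
  rw [← toAdd_prod, ← List.prod_ofFn, this, ← map_list_prod, prod_ofFn_of, map_one, toAdd_one]

end PolygonalGroup

theorem two_periods_divisible_of_surjective_onto_zmod_primePow_general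
    (p k q : ℕ) (hp : p.Prime) (hk : 1 ≤ k) (hq : q = p ^ k)
    (r : ℕ) (m : Fin r → ℕ)
    (f : PolygonalGroup r m →* Multiplicative (ZMod q))
    (hf : Function.Surjective f) :
    ∃ i j : Fin r, i ≠ j ∧ q ∣ m i ∧ q ∣ m j := by
  subst hq
  have := ZMod.isLocalRing_prime_pow hp (Nat.one_le_iff_ne_zero.mp hk)
  set a : Fin r → ZMod (p ^ k) := fun i => (f (PresentedGroup.of i)).toAdd
  have period_dvd {i : Fin r} (hi : IsUnit (a i)) : p ^ k ∣ m i := by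
    have h := PolygonalGroup.nsmul_toAdd_map_of f i
    rw [nsmul_eq_mul] at h
    exact (ZMod.natCast_eq_zero_iff _ _).mp (hi.mul_left_eq_zero.mp h)
  obtain ⟨i, hi⟩ := IsLocalRing.exists_isUnit_of_surjective hf
  obtain ⟨j, hji, hj⟩ :=
    IsLocalRing.exists_ne_isUnit_of_sum_eq_zero (PolygonalGroup.sum_toAdd_map_of f) hi
  exact ⟨i, j, hji.symm, period_dvd hi, period_dvd hj⟩

/-- If `Γ(0; m₁,…,m_r)` surjects onto the cyclic group `ℤ/qℤ` with `q = p^k`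
a prime power, then at least two of the periods are divisible by `q`. -/
theorem two_periods_divisible_of_surjective_onto_zmod_primePow
    (p k q : ℕ) (hp : p.Prime) (hk : 1 ≤ k) (hq : q = p ^ k)
    (r : ℕ) (hr : 1 ≤ r) (m : Fin r → ℕ) (hm : ∀ i, 2 ≤ m i)
    (f : PolygonalGroup r m →* Multiplicative (ZMod q))
    (hf : Function.Surjective f) :
    ∃ i j : Fin r, i ≠ j ∧ q ∣ m i ∧ q ∣ m j :=
  two_periods_divisible_of_surjective_onto_zmod_primePow_general p k q hp hk hq r m f hf
end

section
/- Let h ≥ 0 and r ≥ 0 be integers and m_1, …, m_r integers with m_i ≥ 2 for all i, and suppose 0 < μ(h; m_1,…,m_r). If there exist indices i ≠ j with 8 ∣ m_i and 8 ∣ m_j, then μ(h; m_1,…,m_r) ≥ 1/4; moreover μ(0; 2, 8, 8) = 1/4, so the bound is attained. -/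
/-- If `0 < μ(h; m₁,…,m_r)` and two of the periods are divisible by `8`, then
`μ ≥ 1/4`; moreover `μ(0; 2, 8, 8) = 1/4`, so the bound is attained. -/
theorem mu_ge_quarter_of_two_periods_div_eight (h r : ℕ) (m : Fin r → ℕ)
    (hm : ∀ i, 2 ≤ m i) (h0 : 0 < mu h r m)
    (hdiv : ∃ i j : Fin r, i ≠ j ∧ 8 ∣ m i ∧ 8 ∣ m j) :
    1 / 4 ≤ mu h r m ∧ mu 0 3 ![2, 8, 8] = 1 / 4 := by
  have hval : mu 0 3 ![2, 8, 8] = 1 / 4 := by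
    simp [mu, Fin.sum_univ_three]
    norm_num
  refine ⟨?_, hval⟩
  obtain ⟨i, j, hij, hi8, hj8⟩ := hdiv
  set t : Fin r → ℚ := fun k => 1 - ((m k : ℚ))⁻¹ with ht
  clear_value t
  have hinv : ∀ k, ((m k : ℚ))⁻¹ ≤ 1 / 2 := by
    intro k
    have h2 : (2:ℚ) ≤ (m k : ℚ) := by exact_mod_cast hm k
    rw [inv_le_comm₀ (by linarith) (by norm_num)]
    linarith
  have htl : ∀ k, (1:ℚ)/2 ≤ t k := by
    intro k; have := hinv k; simp only [ht]; linarith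
  have htu : ∀ k, t k < 1 := by
    intro k
    have h2 : (2:ℚ) ≤ (m k : ℚ) := by exact_mod_cast hm k
    have : (0:ℚ) < ((m k : ℚ))⁻¹ := by positivity
    simp only [ht]; linarith
  have hbig : ∀ k, 8 ∣ m k → (7:ℚ)/8 ≤ t k := by
    intro k hk
    have h8 : 8 ≤ m k := Nat.le_of_dvd (by have := hm k; omega) hk
    have h8' : (8:ℚ) ≤ (m k : ℚ) := by exact_mod_cast h8
    have : ((m k : ℚ))⁻¹ ≤ 1/8 := by
      rw [inv_le_comm₀ (by linarith) (by norm_num)]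
      linarith
    simp only [ht]; linarith
  have hji : j ∈ Finset.univ.erase i := Finset.mem_erase.2 ⟨hij.symm, Finset.mem_univ j⟩
  set e : Finset (Fin r) := (Finset.univ.erase i).erase j with he
  clear_value e
  have hsum : ∑ k, t k = t i + (t j + ∑ k ∈ e, t k) := by
    rw [he, Finset.add_sum_erase _ t hji, Finset.add_sum_erase _ t (Finset.mem_univ i)]
  have hRnn : (0:ℚ) ≤ ∑ k ∈ e, t k :=
    Finset.sum_nonneg fun k _ => le_trans (by norm_num) (htl k)
  have hmu : mu h r m = 2 * h - 2 + (t i + (t j + ∑ k ∈ e, t k)) := by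
    rw [mu, ← hsum]; simp only [ht]
  rcases Nat.eq_zero_or_pos h with hh | hh
  · -- h = 0
    have hR : (0:ℚ) < ∑ k ∈ e, t k := by
      by_contra hc
      push_neg at hc
      have hR0 : ∑ k ∈ e, t k = 0 := le_antisymm hc hRnn
      rw [hmu, hh, hR0] at h0
      have := htu i; have := htu j
      push_cast at h0
      linarith
    have hne : e.Nonempty := by
      by_contra hc
      rw [Finset.not_nonempty_iff_eq_empty] at hc
      rw [hc, Finset.sum_empty] at hR
      exact lt_irrefl 0 hR
    obtain ⟨k, hk⟩ := hne
    have hle : t k ≤ ∑ k ∈ e, t k :=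
      Finset.single_le_sum (fun x _ => le_trans (by norm_num) (htl x)) hk
    have := htl k
    have := hbig i hi8
    have := hbig j hj8
    rw [hmu, hh]
    have h20 : ((0:ℕ):ℚ) = 0 := by norm_num
    rw [h20]
    linarith [hle, htl k, hbig i hi8, hbig j hj8]
  · -- h ≥ 1
    have h1 : (1:ℚ) ≤ h := by exact_mod_cast hh
    have := hbig i hi8
    have := hbig j hj8
    rw [hmu]
    linarith
end

section
/- Let h ≥ 0 and r ≥ 0 be integers and m_1, …, m_r integers with m_i ≥ 2 for all i, and suppose 0 < μ(h; m_1,…,m_r). If there exist indices i ≠ j with 4 ∣ m_i and 4 ∣ m_j, then μ(h; m_1,…,m_r) ≥ 1/5 unless h = 0, r = 3 and the multiset {m_1, m_2, m_3} is one of {3,4,4}, {2,4,8}, {2,4,12}, {2,4,16} (where μ equals 1/6, 1/8, 1/6, 3/16 respectively). -/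
def mu3 (a b c : ℕ) : ℚ := 1 - (a:ℚ)⁻¹ - (b:ℚ)⁻¹ - (c:ℚ)⁻¹

lemma mu3_132 (a b c : ℕ) : mu3 a c b = mu3 a b c := by unfold mu3; ring
lemma mu3_231 (a b c : ℕ) : mu3 b c a = mu3 a b c := by unfold mu3; ring
lemma mu3_213 (a b c : ℕ) : mu3 b a c = mu3 a b c := by unfold mu3; ring

lemma ms_132 (a b c : ℕ) : ({a,c,b} : Multiset ℕ) = {a,b,c} := by
  show a ::ₘ c ::ₘ b ::ₘ 0 = a ::ₘ b ::ₘ c ::ₘ 0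
  rw [Multiset.cons_swap c b]
lemma ms_231 (a b c : ℕ) : ({b,c,a} : Multiset ℕ) = {a,b,c} := by
  show b ::ₘ c ::ₘ a ::ₘ 0 = a ::ₘ b ::ₘ c ::ₘ 0
  rw [Multiset.cons_swap c a, Multiset.cons_swap b a]
lemma ms_213 (a b c : ℕ) : ({b,a,c} : Multiset ℕ) = {a,b,c} := by
  show b ::ₘ a ::ₘ c ::ₘ 0 = a ::ₘ b ::ₘ c ::ₘ 0
  rw [Multiset.cons_swap b a]

lemma inv_le_of_nat_le {n k : ℕ} (hk : 0 < k) (h : k ≤ n) : (n:ℚ)⁻¹ ≤ (k:ℚ)⁻¹ := by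
  have h1 : (0:ℚ) < k := by exact_mod_cast hk
  exact inv_anti₀ h1 (by exact_mod_cast h)

def isExc (a b c : ℕ) : Prop :=
    (({a,b,c} : Multiset ℕ) = {3,4,4} ∧ mu3 a b c = 1/6) ∨
    (({a,b,c} : Multiset ℕ) = {2,4,8} ∧ mu3 a b c = 1/8) ∨
    (({a,b,c} : Multiset ℕ) = {2,4,12} ∧ mu3 a b c = 1/6) ∨
    (({a,b,c} : Multiset ℕ) = {2,4,16} ∧ mu3 a b c = 3/16)

lemma aux2 (a b c : ℕ) (ha : 2 ≤ a) (hb : 2 ≤ b) (hc : 2 ≤ c)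
    (h4a : 4 ∣ a) (h4b : 4 ∣ b) (hab : a ≤ b)
    (hpos : 0 < mu3 a b c) (hlt : mu3 a b c < 1/5) : isExc a b c := by
  unfold isExc
  have ha4 : 4 ≤ a := Nat.le_of_dvd (by omega) h4a
  have hb4 : 4 ≤ b := Nat.le_of_dvd (by omega) h4b
  have hia : (a:ℚ)⁻¹ ≤ 4⁻¹ := by
    simpa using inv_le_of_nat_le (by norm_num) ha4
  have hiba : (b:ℚ)⁻¹ ≤ (a:ℚ)⁻¹ := inv_le_of_nat_le (by omega) hab
  have hsum : 4/5 < (a:ℚ)⁻¹ + (b:ℚ)⁻¹ + (c:ℚ)⁻¹ := by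
    unfold mu3 at hlt; linarith
  have hc3 : c ≤ 3 := by
    by_contra hc4
    have : (c:ℚ)⁻¹ ≤ 4⁻¹ := by
      simpa using inv_le_of_nat_le (by norm_num) (by omega : 4 ≤ c)
    linarith
  have ha6 : a ≤ 6 := by
    by_contra h7
    have h1 : (a:ℚ)⁻¹ ≤ 7⁻¹ := by
      simpa using inv_le_of_nat_le (by norm_num) (by omega : 7 ≤ a)
    have hic : (c:ℚ)⁻¹ ≤ 2⁻¹ := by
      simpa using inv_le_of_nat_le (by norm_num) hc
    linarith
  have ha' : a = 4 := by omega
  subst ha'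
  have hb19 : b ≤ 19 := by
    by_contra h20
    have h1 : (b:ℚ)⁻¹ ≤ 20⁻¹ := by
      simpa using inv_le_of_nat_le (by norm_num) (by omega : 20 ≤ b)
    have hic : (c:ℚ)⁻¹ ≤ 2⁻¹ := by
      simpa using inv_le_of_nat_le (by norm_num) hc
    norm_num at hia
    linarith
  interval_cases c
  · interval_cases b <;> first
      | omega
      | (right; left; exact ⟨by decide, by norm_num [mu3]⟩)
      | (right; right; left; exact ⟨by decide, by norm_num [mu3]⟩)
      | (right; right; right; exact ⟨by decide, by norm_num [mu3]⟩)
      | (norm_num [mu3] at hpos)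
  · have hb4' : b ≤ 4 := by
      by_contra h5
      have h1 : (b:ℚ)⁻¹ ≤ 8⁻¹ := by
        simpa using inv_le_of_nat_le (by norm_num) (by omega : 8 ≤ b)
      norm_num at *
      linarith
    have : b = 4 := by omega
    subst this
    left; exact ⟨by decide, by norm_num [mu3]⟩

lemma aux2' (a b c : ℕ) (ha : 2 ≤ a) (hb : 2 ≤ b) (hc : 2 ≤ c)
    (h4a : 4 ∣ a) (h4b : 4 ∣ b)
    (hpos : 0 < mu3 a b c) (hlt : mu3 a b c < 1/5) : isExc a b c := by
  rcases le_total a b with hab | hba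
  · exact aux2 a b c ha hb hc h4a h4b hab hpos hlt
  · have := aux2 b a c hb ha hc h4b h4a hba (by rwa [mu3_213]) (by rwa [mu3_213])
    unfold isExc at this ⊢
    rwa [ms_213, mu3_213] at this

/-- fully symmetric version: two of the three are divisible by 4 -/
lemma aux3 (a b c : ℕ) (ha : 2 ≤ a) (hb : 2 ≤ b) (hc : 2 ≤ c)
    (h4 : (4 ∣ a ∧ 4 ∣ b) ∨ (4 ∣ a ∧ 4 ∣ c) ∨ (4 ∣ b ∧ 4 ∣ c))
    (hpos : 0 < mu3 a b c) (hlt : mu3 a b c < 1/5) : isExc a b c := by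
  rcases h4 with ⟨h1, h2⟩ | ⟨h1, h2⟩ | ⟨h1, h2⟩
  · exact aux2' a b c ha hb hc h1 h2 hpos hlt
  · have := aux2' a c b ha hc hb h1 h2 (by rwa [mu3_132]) (by rwa [mu3_132])
    unfold isExc at this ⊢
    rwa [ms_132, mu3_132] at this
  · have := aux2' b c a hb hc ha h1 h2 (by rwa [mu3_231]) (by rwa [mu3_231])
    unfold isExc at this ⊢
    rwa [ms_231, mu3_231] at this


/-- If `0 < μ(h; m₁,…,m_r)` and two of the periods are divisible by `4`, then
`μ ≥ 1/5` unless `h = 0`, `r = 3` and the multiset of periods is one of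
`{3,4,4}`, `{2,4,8}`, `{2,4,12}`, `{2,4,16}` (where `μ` equals `1/6`, `1/8`,
`1/6`, `3/16` respectively). -/
theorem mu_ge_fifth_of_two_periods_div_four (h r : ℕ) (m : Fin r → ℕ)
    (hm : ∀ i, 2 ≤ m i) (h0 : 0 < mu h r m)
    (hdiv : ∃ i j : Fin r, i ≠ j ∧ 4 ∣ m i ∧ 4 ∣ m j) :
    1 / 5 ≤ mu h r m ∨ (h = 0 ∧ r = 3 ∧
      ((Multiset.map m Finset.univ.val = ({3, 4, 4} : Multiset ℕ) ∧ mu h r m = 1 / 6) ∨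
       (Multiset.map m Finset.univ.val = ({2, 4, 8} : Multiset ℕ) ∧ mu h r m = 1 / 8) ∨
       (Multiset.map m Finset.univ.val = ({2, 4, 12} : Multiset ℕ) ∧ mu h r m = 1 / 6) ∨
       (Multiset.map m Finset.univ.val = ({2, 4, 16} : Multiset ℕ) ∧ mu h r m = 3 / 16))) := by
  obtain ⟨i, j, hij, hi4, hj4⟩ := hdiv
  have hmpos : ∀ k, (0:ℚ) < (m k : ℚ) := fun k => by
    have := hm k; exact_mod_cast (by omega : 0 < m k)
  have hterm : ∀ k, (1/2 : ℚ) ≤ 1 - ((m k : ℚ))⁻¹ := by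
    intro k
    have h2 : (2:ℚ) ≤ (m k : ℚ) := by exact_mod_cast hm k
    have : ((m k : ℚ))⁻¹ ≤ 2⁻¹ := inv_anti₀ (by norm_num) h2
    linarith
  have hterm4 : ∀ k, 4 ∣ m k → (3/4 : ℚ) ≤ 1 - ((m k : ℚ))⁻¹ := by
    intro k hk
    have h4 : (4:ℚ) ≤ (m k : ℚ) := by
      exact_mod_cast Nat.le_of_dvd (by have := hm k; omega) hk
    have : ((m k : ℚ))⁻¹ ≤ 4⁻¹ := inv_anti₀ (by norm_num) h4
    linarith
  have hijv : (i:ℕ) ≠ (j:ℕ) := fun e => hij (Fin.ext e)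
  have hr2 : 2 ≤ r := by have := i.2; have := j.2; omega
  by_cases hmain : h = 0 ∧ r ≤ 3
  · obtain ⟨hh, hr3⟩ := hmain
    subst hh
    interval_cases r
    · -- r = 2 : contradiction
      exfalso
      have e : mu 0 2 m = -((m 0:ℚ))⁻¹ - ((m 1:ℚ))⁻¹ := by
        simp [mu, Fin.sum_univ_two]; ring
      rw [e] at h0
      have := inv_pos.mpr (hmpos 0)
      have := inv_pos.mpr (hmpos 1)
      linarith
    · -- r = 3
      have hmu : mu 0 3 m = mu3 (m 0) (m 1) (m 2) := by
        simp [mu, mu3, Fin.sum_univ_three]; ring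
      by_cases h15 : 1/5 ≤ mu 0 3 m
      · exact Or.inl h15
      · right
        refine ⟨rfl, rfl, ?_⟩
        have h4 : (4 ∣ m 0 ∧ 4 ∣ m 1) ∨ (4 ∣ m 0 ∧ 4 ∣ m 2) ∨ (4 ∣ m 1 ∧ 4 ∣ m 2) := by
          fin_cases i <;> fin_cases j <;> simp_all <;> tauto
        have hms : Multiset.map m Finset.univ.val = {m 0, m 1, m 2} := rfl
        rw [hms, hmu]
        have := aux3 (m 0) (m 1) (m 2) (hm 0) (hm 1) (hm 2) h4
          (by rw [← hmu]; exact h0) (by rw [← hmu]; linarith)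
        unfold isExc at this
        exact this
  · -- h ≥ 1 or r ≥ 4 : mu ≥ 1/5
    left
    push_neg at hmain
    have hsub : ({i, j} : Finset (Fin r)) ⊆ Finset.univ := Finset.subset_univ _
    have hsplit : ∑ k ∈ Finset.univ \ {i, j}, (1 - ((m k:ℚ))⁻¹)
        + ∑ k ∈ ({i, j} : Finset (Fin r)), (1 - ((m k:ℚ))⁻¹)
        = ∑ k, (1 - ((m k:ℚ))⁻¹) := Finset.sum_sdiff hsub
    have hpair : ∑ k ∈ ({i, j} : Finset (Fin r)), (1 - ((m k:ℚ))⁻¹)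
        = (1 - ((m i:ℚ))⁻¹) + (1 - ((m j:ℚ))⁻¹) := Finset.sum_pair hij
    have hcard : (Finset.univ \ ({i, j} : Finset (Fin r))).card = r - 2 := by
      rw [Finset.card_sdiff_of_subset hsub, Finset.card_pair hij, Finset.card_univ, Fintype.card_fin]
    have hrest : ((r - 2 : ℕ) : ℚ) * (1/2)
        ≤ ∑ k ∈ Finset.univ \ {i, j}, (1 - ((m k:ℚ))⁻¹) := by
      have := Finset.card_nsmul_le_sum (Finset.univ \ ({i, j} : Finset (Fin r)))
        (fun k => 1 - ((m k:ℚ))⁻¹) (1/2) (fun k _ => hterm k)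
      rwa [hcard, nsmul_eq_mul] at this
    have hii := hterm4 i hi4
    have hjj := hterm4 j hj4
    have hcast : ((r - 2 : ℕ) : ℚ) = (r : ℚ) - 2 := by
      rw [Nat.cast_sub hr2]; norm_num
    unfold mu
    rcases Nat.eq_zero_or_pos h with hh | hh
    · have hr4 : 4 ≤ r := by have := hmain hh; omega
      have h0' : (0:ℚ) ≤ (h:ℚ) := by positivity
      have h4r : (4:ℚ) ≤ (r:ℚ) := by exact_mod_cast hr4
      rw [hcast] at hrest
      linarith
    · have h1 : (1:ℚ) ≤ (h:ℚ) := by exact_mod_cast hh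
      have hr0 : (0:ℚ) ≤ ((r-2:ℕ):ℚ) * (1/2) := by positivity
      linarith
end

section
/- Let h ≥ 0 and r ≥ 0 be integers and m_1, …, m_r integers with m_i ≥ 2 for all i, and suppose 0 < μ(h; m_1,…,m_r). Assume there exist indices i ≠ j with m_i and m_j even, and indices k ≠ l with 3 ∣ m_k and 3 ∣ m_l (the two pairs of indices may overlap). Then μ(h; m_1,…,m_r) ≥ 2/9 unless h = 0, r = 3 and the multiset {m_1, m_2, m_3} equals {2,6,6}, or equals {2,3,6k} for some integer k ≥ 2. -/
lemma mu_inv_le_q {n : ℕ} {q : ℚ} (hq : 0 < q) (h : q ≤ (n:ℚ)) : ((n:ℚ))⁻¹ ≤ q⁻¹ :=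
  inv_anti₀ hq h

lemma mu_mswap (a b c : ℕ) : ({a,b,c} : Multiset ℕ) = {b,a,c} := by
  simp only [Multiset.insert_eq_cons]
  exact Multiset.cons_swap _ _ _

lemma mu_mswap23 (a b c : ℕ) : ({a,b,c} : Multiset ℕ) = {a,c,b} := by
  simp only [Multiset.insert_eq_cons]
  congr 1
  exact Multiset.cons_swap _ _ _

lemma mu_mrot (a b c : ℕ) : ({a,b,c} : Multiset ℕ) = {b,c,a} := by
  simp only [Multiset.insert_eq_cons]
  rw [Multiset.cons_swap]
  congr 1
  exact Multiset.cons_swap _ _ _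

lemma mu_mrot2 (a b c : ℕ) : ({a,b,c} : Multiset ℕ) = {c,a,b} :=
  (mu_mrot a b c).trans (mu_mrot b c a)

lemma mu_mrev (a b c : ℕ) : ({a,b,c} : Multiset ℕ) = {c,b,a} :=
  (mu_mswap23 a b c).trans (mu_mrot a c b)

lemma mu_pair3 {P : Fin 3 → Prop} {i j : Fin 3} (hij : i ≠ j) (hi : P i) (hj : P j) :
    (P 0 ∧ P 1) ∨ (P 0 ∧ P 2) ∨ (P 1 ∧ P 2) := by
  fin_cases i <;> fin_cases j <;> simp_all

/-- Case where the two even periods coincide with the two periods divisible by 3. -/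
lemma mu_keyT1 (x y z : ℕ) (hx2 : 2 ≤ x) (hy2 : 2 ≤ y) (hz2 : 2 ≤ z)
    (hx : 6 ∣ x) (hy : 6 ∣ y)
    (hs : (x:ℚ)⁻¹ + (y:ℚ)⁻¹ + (z:ℚ)⁻¹ < 1) :
    (x:ℚ)⁻¹ + (y:ℚ)⁻¹ + (z:ℚ)⁻¹ ≤ 7/9 ∨ ({x,y,z} : Multiset ℕ) = {2,6,6} ∨
      ∃ k, 2 ≤ k ∧ ({x,y,z} : Multiset ℕ) = {2,3,6*k} := by
  have hx6 : 6 ≤ x := Nat.le_of_dvd (by omega) hx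
  have hy6 : 6 ≤ y := Nat.le_of_dvd (by omega) hy
  have hxq : (x:ℚ)⁻¹ ≤ (6:ℚ)⁻¹ := mu_inv_le_q (by norm_num) (by exact_mod_cast hx6)
  have hyq : (y:ℚ)⁻¹ ≤ (6:ℚ)⁻¹ := mu_inv_le_q (by norm_num) (by exact_mod_cast hy6)
  by_cases hz3 : 3 ≤ z
  · have hzq : (z:ℚ)⁻¹ ≤ (3:ℚ)⁻¹ := mu_inv_le_q (by norm_num) (by exact_mod_cast hz3)
    left; linarith
  · have hz : z = 2 := by omega
    subst hz
    by_cases hx6' : x = 6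
    · by_cases hy6' : y = 6
      · subst hx6' hy6'
        right; left
        exact (mu_mrev 6 6 2).trans (mu_mswap23 2 6 6).symm
      · have hy12 : 12 ≤ y := by omega
        have hyq' : (y:ℚ)⁻¹ ≤ (12:ℚ)⁻¹ := mu_inv_le_q (by norm_num) (by exact_mod_cast hy12)
        left; push_cast; linarith
    · have hx12 : 12 ≤ x := by omega
      have hxq' : (x:ℚ)⁻¹ ≤ (12:ℚ)⁻¹ := mu_inv_le_q (by norm_num) (by exact_mod_cast hx12)
      left; push_cast; linarith

/-- Case `x` divisible by 6, `y` even, `z` divisible by 3. -/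
lemma mu_keyT2 (x y z : ℕ) (hx2 : 2 ≤ x) (hy2 : 2 ≤ y) (hz2 : 2 ≤ z)
    (hx : 6 ∣ x) (hy : 2 ∣ y) (hz : 3 ∣ z)
    (hs : (x:ℚ)⁻¹ + (y:ℚ)⁻¹ + (z:ℚ)⁻¹ < 1) :
    (x:ℚ)⁻¹ + (y:ℚ)⁻¹ + (z:ℚ)⁻¹ ≤ 7/9 ∨ ({x,y,z} : Multiset ℕ) = {2,6,6} ∨
      ∃ k, 2 ≤ k ∧ ({x,y,z} : Multiset ℕ) = {2,3,6*k} := by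
  have hx6 : 6 ≤ x := Nat.le_of_dvd (by omega) hx
  have hxq : (x:ℚ)⁻¹ ≤ (6:ℚ)⁻¹ := mu_inv_le_q (by norm_num) (by exact_mod_cast hx6)
  have hz3 : 3 ≤ z := by omega
  by_cases hy4 : y = 2
  swap
  · have hy4' : 4 ≤ y := by omega
    have hyq : (y:ℚ)⁻¹ ≤ (4:ℚ)⁻¹ := mu_inv_le_q (by norm_num) (by exact_mod_cast hy4')
    have hzq : (z:ℚ)⁻¹ ≤ (3:ℚ)⁻¹ := mu_inv_le_q (by norm_num) (by exact_mod_cast hz3)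
    left; linarith
  · subst hy4
    rcases (show z = 3 ∨ z = 6 ∨ 9 ≤ z by omega) with hz' | hz' | hz'
    · -- z = 3 : exceptional family {2,3,6k}
      subst hz'
      have hxlt : (x:ℚ)⁻¹ < (6:ℚ)⁻¹ := by push_cast at hs ⊢; linarith
      have hx7 : 6 < x := by
        by_contra hle
        have : (x:ℚ) ≤ 6 := by exact_mod_cast (by omega : x ≤ 6)
        have : (6:ℚ)⁻¹ ≤ (x:ℚ)⁻¹ :=
          inv_anti₀ (by exact_mod_cast (show 0 < x by omega)) this
        linarith
      obtain ⟨k, rfl⟩ := hx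
      have hk2 : 2 ≤ k := by omega
      right; right
      exact ⟨k, hk2, (mu_mrot (6*k) 2 3).trans rfl⟩
    · -- z = 6
      subst hz'
      by_cases hx6' : x = 6
      · subst hx6'
        right; left
        exact mu_mswap 6 2 6
      · have hx12 : 12 ≤ x := by omega
        have hxq' : (x:ℚ)⁻¹ ≤ (12:ℚ)⁻¹ := mu_inv_le_q (by norm_num) (by exact_mod_cast hx12)
        left; push_cast; linarith
    · have hzq : (z:ℚ)⁻¹ ≤ (9:ℚ)⁻¹ := mu_inv_le_q (by norm_num) (by exact_mod_cast hz')
      left; push_cast; linarith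

/-- The key numerical lemma for three periods. -/
lemma mu_key (a b c : ℕ) (ha : 2 ≤ a) (hb : 2 ≤ b) (hc : 2 ≤ c)
    (hE : (2∣a ∧ 2∣b) ∨ (2∣a ∧ 2∣c) ∨ (2∣b ∧ 2∣c))
    (hT : (3∣a ∧ 3∣b) ∨ (3∣a ∧ 3∣c) ∨ (3∣b ∧ 3∣c))
    (hs : (a:ℚ)⁻¹ + (b:ℚ)⁻¹ + (c:ℚ)⁻¹ < 1) :
    (a:ℚ)⁻¹ + (b:ℚ)⁻¹ + (c:ℚ)⁻¹ ≤ 7/9 ∨ ({a,b,c} : Multiset ℕ) = {2,6,6} ∨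
      ∃ k, 2 ≤ k ∧ ({a,b,c} : Multiset ℕ) = {2,3,6*k} := by
  rcases hE with ⟨e1, e2⟩ | ⟨e1, e2⟩ | ⟨e1, e2⟩ <;>
    rcases hT with ⟨t1, t2⟩ | ⟨t1, t2⟩ | ⟨t1, t2⟩
  · -- E=ab, T=ab : a,b div by 6
    rcases mu_keyT1 a b c ha hb hc (by omega) (by omega) hs with H | H | ⟨k, hk, H⟩
    · left; linarith
    · right; left; exact H
    · right; right; exact ⟨k, hk, H⟩
  · -- E=ab, T=ac : 6∣a, even b, 3∣c
    rcases mu_keyT2 a b c ha hb hc (by omega) e2 t2 hs with H | H | ⟨k, hk, H⟩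
    · left; linarith
    · right; left; exact H
    · right; right; exact ⟨k, hk, H⟩
  · -- E=ab, T=bc : 6∣b, even a, 3∣c
    rcases mu_keyT2 b a c hb ha hc (by omega) e1 t2 (by linarith) with H | H | ⟨k, hk, H⟩
    · left; linarith
    · right; left; exact (mu_mswap a b c).trans H
    · right; right; exact ⟨k, hk, (mu_mswap a b c).trans H⟩
  · -- E=ac, T=ab : 6∣a, even c, 3∣b
    rcases mu_keyT2 a c b ha hc hb (by omega) e2 t2 (by linarith) with H | H | ⟨k, hk, H⟩
    · left; linarith
    · right; left; exact (mu_mswap23 a b c).trans H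
    · right; right; exact ⟨k, hk, (mu_mswap23 a b c).trans H⟩
  · -- E=ac, T=ac : a,c div by 6
    rcases mu_keyT1 a c b ha hc hb (by omega) (by omega) (by linarith) with H | H | ⟨k, hk, H⟩
    · left; linarith
    · right; left; exact (mu_mswap23 a b c).trans H
    · right; right; exact ⟨k, hk, (mu_mswap23 a b c).trans H⟩
  · -- E=ac, T=bc : 6∣c, even a, 3∣b
    rcases mu_keyT2 c a b hc ha hb (by omega) e1 t1 (by linarith) with H | H | ⟨k, hk, H⟩
    · left; linarith
    · right; left; exact (mu_mrot2 a b c).trans H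
    · right; right; exact ⟨k, hk, (mu_mrot2 a b c).trans H⟩
  · -- E=bc, T=ab : 6∣b, even c, 3∣a
    rcases mu_keyT2 b c a hb hc ha (by omega) e2 t1 (by linarith) with H | H | ⟨k, hk, H⟩
    · left; linarith
    · right; left; exact (mu_mrot a b c).trans H
    · right; right; exact ⟨k, hk, (mu_mrot a b c).trans H⟩
  · -- E=bc, T=ac : 6∣c, even b, 3∣a
    rcases mu_keyT2 c b a hc hb ha (by omega) e1 t1 (by linarith) with H | H | ⟨k, hk, H⟩
    · left; linarith
    · right; left; exact (mu_mrev a b c).trans H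
    · right; right; exact ⟨k, hk, (mu_mrev a b c).trans H⟩
  · -- E=bc, T=bc : b,c div by 6
    rcases mu_keyT1 b c a hb hc ha (by omega) (by omega) (by linarith) with H | H | ⟨k, hk, H⟩
    · left; linarith
    · right; left; exact (mu_mrot a b c).trans H
    · right; right; exact ⟨k, hk, (mu_mrot a b c).trans H⟩

/-- If `0 < μ(h; m₁,…,m_r)`, two of the periods are even, and two of the
periods are divisible by `3`, then `μ ≥ 2/9` unless `h = 0`, `r = 3` and the
multiset of periods is `{2,6,6}` or `{2,3,6k}` for some `k ≥ 2`. -/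
theorem mu_ge_two_ninths_of_even_and_three_periods (h r : ℕ) (m : Fin r → ℕ)
    (hm : ∀ i, 2 ≤ m i) (h0 : 0 < mu h r m)
    (heven : ∃ i j : Fin r, i ≠ j ∧ 2 ∣ m i ∧ 2 ∣ m j)
    (hthree : ∃ k l : Fin r, k ≠ l ∧ 3 ∣ m k ∧ 3 ∣ m l) :
    2 / 9 ≤ mu h r m ∨ (h = 0 ∧ r = 3 ∧
      (Multiset.map m Finset.univ.val = ({2, 6, 6} : Multiset ℕ) ∨
       ∃ k : ℕ, 2 ≤ k ∧
         Multiset.map m Finset.univ.val = ({2, 3, 6 * k} : Multiset ℕ))) := by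
  obtain ⟨i, j, hij, h2i, h2j⟩ := heven
  obtain ⟨k, l, hkl, h3k, h3l⟩ := hthree
  -- there are at least two periods
  have hr2 : 2 ≤ r := by
    have h1 := i.isLt
    have h2 := j.isLt
    have h3 : (i : ℕ) ≠ (j : ℕ) := Fin.val_ne_of_ne hij
    omega
  -- pointwise bounds
  have hb2 : ∀ i : Fin r, ((m i : ℚ))⁻¹ ≤ (2:ℚ)⁻¹ := fun i =>
    mu_inv_le_q (by norm_num) (by exact_mod_cast hm i)
  have hbpos : ∀ i : Fin r, (0:ℚ) < ((m i : ℚ))⁻¹ := fun i => by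
    have : (0:ℚ) < (m i : ℚ) := by exact_mod_cast (show 0 < m i by have := hm i; omega)
    positivity
  have hb3 : ∀ i : Fin r, 3 ∣ m i → ((m i : ℚ))⁻¹ ≤ (3:ℚ)⁻¹ := fun i hi =>
    mu_inv_le_q (by norm_num) (by exact_mod_cast Nat.le_of_dvd (by have := hm i; omega) hi)
  -- the sum of the terms is at least r/2
  have hsum : (r : ℚ) / 2 ≤ ∑ i, (1 - ((m i : ℚ))⁻¹) := by
    have := Finset.card_nsmul_le_sum Finset.univ (fun i => 1 - ((m i : ℚ))⁻¹) (1/2)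
      (fun i _ => by have := hb2 i; norm_num at this ⊢; linarith)
    simpa [Finset.card_univ, nsmul_eq_mul, mul_comm, div_eq_mul_inv, mul_one_div] using this
  rcases Nat.eq_zero_or_pos h with hh | hh
  swap
  · -- h ≥ 1
    left
    have h1 : (1:ℚ) ≤ (h:ℚ) := by exact_mod_cast hh
    have h2 : (2:ℚ) ≤ (r:ℚ) := by exact_mod_cast hr2
    unfold mu
    nlinarith [hsum]
  subst hh
  by_cases hr5 : 5 ≤ r
  · left
    have h5 : (5:ℚ) ≤ (r:ℚ) := by exact_mod_cast hr5
    unfold mu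
    push_cast
    linarith [hsum]
  interval_cases r
  · -- r = 2 : contradiction with 0 < mu
    exfalso
    have := h0
    unfold mu at this
    rw [Fin.sum_univ_two] at this
    have p0 := hbpos 0
    have p1 := hbpos 1
    push_cast at this
    linarith
  · -- r = 3 : the main case
    have hE := mu_pair3 (P := fun t => 2 ∣ m t) hij h2i h2j
    have hT := mu_pair3 (P := fun t => 3 ∣ m t) hkl h3k h3l
    have hpos : ((m 0 : ℚ))⁻¹ + ((m 1 : ℚ))⁻¹ + ((m 2 : ℚ))⁻¹ < 1 := by
      have := h0
      unfold mu at this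
      rw [Fin.sum_univ_three] at this
      push_cast at this
      linarith
    have hmap : Multiset.map m Finset.univ.val = ({m 0, m 1, m 2} : Multiset ℕ) := rfl
    rcases mu_key (m 0) (m 1) (m 2) (hm 0) (hm 1) (hm 2) hE hT hpos with H | H | ⟨kk, hkk, H⟩
    · left
      unfold mu
      rw [Fin.sum_univ_three]
      push_cast
      linarith
    · right
      exact ⟨rfl, rfl, Or.inl (hmap.trans H)⟩
    · right
      exact ⟨rfl, rfl, Or.inr ⟨kk, hkk, hmap.trans H⟩⟩
  · -- r = 4
    left
    have hmu : mu 0 4 m = 2 - (((m 0 : ℚ))⁻¹ + ((m 1 : ℚ))⁻¹ + ((m 2 : ℚ))⁻¹ + ((m 3 : ℚ))⁻¹) := by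
      unfold mu
      rw [Fin.sum_univ_four]
      push_cast
      ring
    rw [hmu]
    fin_cases k <;> fin_cases l <;>
      first
        | exact absurd rfl hkl
        | (simp only [Fin.mk_zero, Fin.mk_one, show (⟨2, by norm_num⟩ : Fin 4) = 2 from rfl,
             show (⟨3, by norm_num⟩ : Fin 4) = 3 from rfl] at h3k h3l
           linarith [hb2 0, hb2 1, hb2 2, hb2 3, hb3 _ h3k, hb3 _ h3l])
end

section
/- Let p ≥ 5 be a prime. Let h ≥ 0 and r ≥ 0 be integers and m_1, …, m_r integers with m_i ≥ 2 for all i, and suppose 0 < μ(h; m_1,…,m_r). Assume there exist indices i ≠ j with p ∣ m_i and p ∣ m_j, and indices k ≠ l with m_k and m_l even (the pairs of indices may overlap). Then μ(h; m_1,…,m_r) ≥ (p−3)/(2p); moreover μ(0; 2, p, 2p) = (p−3)/(2p), so the bound is attained. -/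
/-- Let `p ≥ 5` be prime. If `0 < μ(h; m₁,…,m_r)`, two of the periods are
divisible by `p`, and two of the periods are even, then `μ ≥ (p-3)/(2p)`;
moreover `μ(0; 2, p, 2p) = (p-3)/(2p)`, so the bound is attained. -/
theorem mu_ge_of_two_periods_div_p_and_two_even (p : ℕ) (hp : p.Prime) (hp5 : 5 ≤ p)
    (h r : ℕ) (m : Fin r → ℕ)
    (hm : ∀ i, 2 ≤ m i) (h0 : 0 < mu h r m)
    (hdivp : ∃ i j : Fin r, i ≠ j ∧ p ∣ m i ∧ p ∣ m j)
    (heven : ∃ k l : Fin r, k ≠ l ∧ 2 ∣ m k ∧ 2 ∣ m l) :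
    ((p : ℚ) - 3) / (2 * p) ≤ mu h r m ∧
      mu 0 3 ![2, p, 2 * p] = ((p : ℚ) - 3) / (2 * p) := by
  obtain ⟨i, j, hij, hpi, hpj⟩ := hdivp
  obtain ⟨k, l, hkl, hek, hel⟩ := heven
  have hpq : (5:ℚ) ≤ (p:ℚ) := by exact_mod_cast hp5
  have hp0 : (0:ℚ) < (p:ℚ) := by linarith
  have hu0 : 0 < ((p:ℚ))⁻¹ := inv_pos.mpr hp0
  have hu5 : ((p:ℚ))⁻¹ ≤ 1/5 := by
    calc ((p:ℚ))⁻¹ ≤ ((5:ℚ))⁻¹ := inv_anti₀ (by norm_num) hpq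
      _ = 1/5 := by norm_num
  set t : Fin r → ℚ := fun x => 1 - ((m x : ℚ))⁻¹ with ht
  have hmpos : ∀ x, (0:ℚ) < (m x : ℚ) := by
    intro x; have := hm x; exact_mod_cast Nat.lt_of_lt_of_le (by norm_num) this
  have thalf : ∀ x, (1:ℚ)/2 ≤ t x := by
    intro x
    have h2 : (2:ℚ) ≤ (m x : ℚ) := by exact_mod_cast hm x
    have : ((m x : ℚ))⁻¹ ≤ (2:ℚ)⁻¹ := inv_anti₀ (by norm_num) h2
    simp only [ht]; norm_num at this ⊢; linarith
  have htnn : ∀ x, (0:ℚ) ≤ t x := fun x => le_trans (by norm_num) (thalf x)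
  have htlt : ∀ x, t x < 1 := by
    intro x
    have h1 : (0:ℚ) < ((m x : ℚ))⁻¹ := inv_pos.mpr (hmpos x)
    simp only [ht]; linarith
  have htp : ∀ x, p ∣ m x → 1 - ((p:ℚ))⁻¹ ≤ t x := by
    intro x hx
    have hle : (p:ℚ) ≤ (m x : ℚ) := by
      exact_mod_cast Nat.le_of_dvd (by have := hm x; omega) hx
    have : ((m x : ℚ))⁻¹ ≤ ((p:ℚ))⁻¹ := inv_anti₀ hp0 hle
    simp only [ht]; linarith
  have ht2p : ∀ x, p ∣ m x → 2 ∣ m x → 1 - ((p:ℚ))⁻¹/2 ≤ t x := by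
    intro x hx h2x
    have hcop : Nat.Coprime 2 p := (Nat.coprime_primes Nat.prime_two hp).mpr (by omega)
    have hdvd : 2 * p ∣ m x := Nat.Coprime.mul_dvd_of_dvd_of_dvd hcop h2x hx
    have hle : (2*(p:ℚ)) ≤ (m x : ℚ) := by
      exact_mod_cast Nat.le_of_dvd (by have := hm x; omega) hdvd
    have h1 : ((m x : ℚ))⁻¹ ≤ (2*(p:ℚ))⁻¹ := inv_anti₀ (by linarith) hle
    have h2 : (2*(p:ℚ))⁻¹ = ((p:ℚ))⁻¹/2 := by
      rw [mul_inv, div_eq_mul_inv, mul_comm]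
    simp only [ht]; rw [h2] at h1; linarith
  have key : ∀ s : Finset (Fin r), ∑ x ∈ s, t x ≤ ∑ x, t x := fun s =>
    Finset.sum_le_sum_of_subset_of_nonneg (Finset.subset_univ s) (fun x _ _ => htnn x)
  have hmu : mu h r m = 2 * (h:ℚ) - 2 + ∑ x, t x := rfl
  clear_value t
  have htarget : ((p : ℚ) - 3) / (2 * p) = 1/2 - 3/2 * ((p:ℚ))⁻¹ := by
    rw [div_eq_iff (by positivity : (2*(p:ℚ)) ≠ 0)]
    field_simp
  constructor
  · rcases Nat.eq_zero_or_pos h with hh | hh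
    · -- h = 0 : need ∑ t ≥ 5/2 - 3/2 * u
      subst hh
      have hS : (5:ℚ)/2 - 3/2 * ((p:ℚ))⁻¹ ≤ ∑ x, t x := by
        by_cases hki : k = i
        · by_cases hlj : l = j
          · -- full overlap: need a third index
            subst hki; subst hlj
            have hextra : ∃ z : Fin r, z ≠ k ∧ z ≠ l := by
              by_contra hc
              push_neg at hc
              have huniv : (Finset.univ : Finset (Fin r)) ⊆ {k, l} := by
                intro z _
                by_cases h2 : z = k
                · simp [h2]
                · simp [hc z h2]
              have hle : ∑ x, t x ≤ ∑ x ∈ ({k, l} : Finset (Fin r)), t x :=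
                Finset.sum_le_sum_of_subset_of_nonneg huniv (fun x _ _ => htnn x)
              rw [Finset.sum_pair hkl] at hle
              have h1 := htlt k
              have h2 := htlt l
              rw [hmu] at h0
              push_cast at h0
              linarith
            obtain ⟨z, hzk, hzl⟩ := hextra
            have hsum : ∑ x ∈ ({z, k, l} : Finset (Fin r)), t x = t z + t k + t l := by
              rw [Finset.sum_insert (by simp [hzk, hzl]), Finset.sum_pair hkl]; ring
            have h1 := ht2p k hpi hek
            have h2 := ht2p l hpj hel
            have h3 := thalf z
            have h4 := key {z, k, l}
            rw [hsum] at h4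
            linarith
          · -- k = i, l ∉ {i,j} : triple {k, j, l}
            subst hki
            have hsum : ∑ x ∈ ({k, j, l} : Finset (Fin r)), t x = t k + t j + t l := by
              rw [Finset.sum_insert (by simp [hij, hkl]),
                Finset.sum_pair (fun hh => hlj hh.symm)]; ring
            have h1 := ht2p k hpi hek
            have h2 := htp j hpj
            have h3 := thalf l
            have h4 := key {k, j, l}
            rw [hsum] at h4
            linarith
        · by_cases hkj : k = j
          · by_cases hli : l = i
            · -- full overlap (swapped)
              subst hkj; subst hli
              have hextra : ∃ z : Fin r, z ≠ k ∧ z ≠ l := by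
                by_contra hc
                push_neg at hc
                have huniv : (Finset.univ : Finset (Fin r)) ⊆ {k, l} := by
                  intro z _
                  by_cases h2 : z = k
                  · simp [h2]
                  · simp [hc z h2]
                have hle : ∑ x, t x ≤ ∑ x ∈ ({k, l} : Finset (Fin r)), t x :=
                  Finset.sum_le_sum_of_subset_of_nonneg huniv (fun x _ _ => htnn x)
                rw [Finset.sum_pair hkl] at hle
                have h1 := htlt k
                have h2 := htlt l
                rw [hmu] at h0
                push_cast at h0
                linarith
              obtain ⟨z, hzk, hzl⟩ := hextra
              have hsum : ∑ x ∈ ({z, k, l} : Finset (Fin r)), t x = t z + t k + t l := by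
                rw [Finset.sum_insert (by simp [hzk, hzl]), Finset.sum_pair hkl]; ring
              have h1 := ht2p k hpj hek
              have h2 := ht2p l hpi hel
              have h3 := thalf z
              have h4 := key {z, k, l}
              rw [hsum] at h4
              linarith
            · -- k = j, l ∉ {i,j} : triple {k, i, l}
              subst hkj
              have hsum : ∑ x ∈ ({k, i, l} : Finset (Fin r)), t x = t k + t i + t l := by
                rw [Finset.sum_insert (by simp [Ne.symm hij, hkl]),
                  Finset.sum_pair (fun hh => hli hh.symm)]; ring
              have h1 := ht2p k hpj hek
              have h2 := htp i hpi
              have h3 := thalf l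
              have h4 := key {k, i, l}
              rw [hsum] at h4
              linarith
          · by_cases hli : l = i
            · -- l = i, k ∉ {i,j} : triple {l, j, k}
              subst hli
              have hsum : ∑ x ∈ ({l, j, k} : Finset (Fin r)), t x = t l + t j + t k := by
                rw [Finset.sum_insert (by simp [hij, Ne.symm hkl]),
                  Finset.sum_pair (fun hh => hkj hh.symm)]; ring
              have h1 := ht2p l hpi hel
              have h2 := htp j hpj
              have h3 := thalf k
              have h4 := key {l, j, k}
              rw [hsum] at h4
              linarith
            · by_cases hlj : l = j
              · -- l = j, k ∉ {i,j} : triple {l, i, k}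
                subst hlj
                have hsum : ∑ x ∈ ({l, i, k} : Finset (Fin r)), t x = t l + t i + t k := by
                  rw [Finset.sum_insert (by simp [Ne.symm hij, Ne.symm hkl]),
                    Finset.sum_pair (fun hh => hki hh.symm)]; ring
                have h1 := ht2p l hpj hel
                have h2 := htp i hpi
                have h3 := thalf k
                have h4 := key {l, i, k}
                rw [hsum] at h4
                linarith
              · -- no overlap : quad {i, j, k, l}
                have hsum : ∑ x ∈ ({i, j, k, l} : Finset (Fin r)), t x
                    = t i + t j + t k + t l := by
                  rw [Finset.sum_insert (by
                      simp only [Finset.mem_insert, Finset.mem_singleton]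
                      push_neg
                      exact ⟨hij, fun hh => hki hh.symm, fun hh => hli hh.symm⟩),
                    Finset.sum_insert (by
                      simp only [Finset.mem_insert, Finset.mem_singleton]
                      push_neg
                      exact ⟨fun hh => hkj hh.symm, fun hh => hlj hh.symm⟩),
                    Finset.sum_pair hkl]
                  ring
                have h1 := htp i hpi
                have h2 := htp j hpj
                have h3 := thalf k
                have h4 := thalf l
                have h5 := key {i, j, k, l}
                rw [hsum] at h5
                linarith
      · rw [hmu, htarget]
        push_cast
        linarith
    · -- h ≥ 1
      have hh1 : (1:ℚ) ≤ (h:ℚ) := by exact_mod_cast hh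
      have hsum : ∑ x ∈ ({i, j} : Finset (Fin r)), t x = t i + t j :=
        Finset.sum_pair hij
      have h1 := thalf i
      have h2 := thalf j
      have h4 := key {i, j}
      rw [hsum] at h4
      rw [hmu, htarget]
      linarith
  · have hpne : (p:ℚ) ≠ 0 := ne_of_gt hp0
    simp only [mu, Fin.sum_univ_three, Matrix.cons_val_zero, Matrix.cons_val_one,
      Matrix.head_cons, Matrix.cons_val_two, Matrix.tail_cons]
    push_cast
    field_simp
    ring
end

section
/- Let h ≥ 0 and r ≥ 0 be integers and m_1, …, m_r integers with m_i ≥ 2 for all i. If 0 < μ(h; m_1,…,m_r) < 1/15, then h = 0, r = 3, and the multiset {m_1, m_2, m_3} is one of {2,3,7}, {2,3,8}, {2,4,5}, {2,3,9}. -/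
/-!
Every term `1 - 1/mᵢ` lies in `[1/2, 1)`, so `2h - 2 + r/2 ≤ μ ≤ 2h - 2 + r`; together with
`0 < μ < 1/15` this forces `h = 0` and `r ∈ {3, 4}`. Moreover `μ - (2h - 2 + r/2)` is `0` when all
periods are `2` and at least `1/6` otherwise, which rules out `r = 4`. For `r = 3` the condition reads
`14/15 < 1/m₁ + 1/m₂ + 1/m₃ < 1`; since two reciprocals of periods with sum below `1` sum to at most
`1/2 + 1/3`, every period is at most `9`, and a finite check remains.
-/

lemma cast_inv_le_cast_inv {k m : ℕ} (hk : 0 < k) (hkm : k ≤ m) : (m : ℚ)⁻¹ ≤ (k : ℚ)⁻¹ :=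
  inv_anti₀ (by exact_mod_cast hk) (by exact_mod_cast hkm)

lemma inv_add_inv_le_five_sixths {b c : ℕ} (hb : 2 ≤ b) (hc : 2 ≤ c)
    (h : (b : ℚ)⁻¹ + (c : ℚ)⁻¹ < 1) : (b : ℚ)⁻¹ + (c : ℚ)⁻¹ ≤ 5 / 6 := by
  have hb2 := cast_inv_le_cast_inv (by norm_num) hb
  have hc2 := cast_inv_le_cast_inv (by norm_num) hc
  rcases eq_or_lt_of_le hb with rfl | hb3
  · rcases eq_or_lt_of_le hc with rfl | hc3
    · norm_num at h
    · linarith [cast_inv_le_cast_inv (k := 3) (by norm_num) hc3]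
  · linarith [cast_inv_le_cast_inv (k := 3) (by norm_num) hb3]

lemma le_nine_of_inv_add_inv_add_inv_mem_Ioo {a b c : ℕ} (hb : 2 ≤ b) (hc : 2 ≤ c)
    (hgt : 14 / 15 < (a : ℚ)⁻¹ + (b : ℚ)⁻¹ + (c : ℚ)⁻¹)
    (hlt : (a : ℚ)⁻¹ + (b : ℚ)⁻¹ + (c : ℚ)⁻¹ < 1) : a ≤ 9 := by
  have ha0 : (0 : ℚ) ≤ (a : ℚ)⁻¹ := by positivity
  have hbc := inv_add_inv_le_five_sixths hb hc (by linarith)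
  by_contra! ha
  linarith [cast_inv_le_cast_inv (k := 10) (by norm_num) ha]

lemma triple_eq_of_inv_add_inv_add_inv_mem_Ioo {a b c : ℕ} (ha : 2 ≤ a) (hb : 2 ≤ b)
    (hc : 2 ≤ c) (hgt : 14 / 15 < (a : ℚ)⁻¹ + (b : ℚ)⁻¹ + (c : ℚ)⁻¹)
    (hlt : (a : ℚ)⁻¹ + (b : ℚ)⁻¹ + (c : ℚ)⁻¹ < 1) :
    ({a, b, c} : Multiset ℕ) = {2, 3, 7} ∨ ({a, b, c} : Multiset ℕ) = {2, 3, 8} ∨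
      ({a, b, c} : Multiset ℕ) = {2, 4, 5} ∨ ({a, b, c} : Multiset ℕ) = {2, 3, 9} := by
  have ha9 := le_nine_of_inv_add_inv_add_inv_mem_Ioo hb hc hgt hlt
  have hb9 := le_nine_of_inv_add_inv_add_inv_mem_Ioo (a := b) ha hc (by linarith) (by linarith)
  have hc9 := le_nine_of_inv_add_inv_add_inv_mem_Ioo (a := c) ha hb (by linarith) (by linarith)
  interval_cases a <;> interval_cases b <;> interval_cases c <;>
    first | decide | (revert hgt hlt; norm_num)

section SumOverPeriods

variable {ι : Type*} [Fintype ι] {m : ι → ℕ}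

variable (m) in
lemma sum_one_sub_inv_le_card : ∑ i, (1 - (m i : ℚ)⁻¹) ≤ Fintype.card ι :=
  calc ∑ i, (1 - (m i : ℚ)⁻¹) ≤ ∑ _i : ι, (1 : ℚ) :=
        Finset.sum_le_sum fun i _ => sub_le_self _ (by positivity)
    _ = Fintype.card ι := by simp

lemma card_div_two_le_sum_one_sub_inv (hm : ∀ i, 2 ≤ m i) :
    (Fintype.card ι : ℚ) / 2 ≤ ∑ i, (1 - (m i : ℚ)⁻¹) :=
  calc (Fintype.card ι : ℚ) / 2 = ∑ _i : ι, (1 - 2⁻¹ : ℚ) := by simp; ring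
    _ ≤ ∑ i, (1 - (m i : ℚ)⁻¹) :=
        Finset.sum_le_sum fun i _ => by linarith [cast_inv_le_cast_inv (by norm_num) (hm i)]

lemma sum_one_sub_inv_eq_or_ge (hm : ∀ i, 2 ≤ m i) :
    ∑ i, (1 - (m i : ℚ)⁻¹) = Fintype.card ι / 2 ∨
      (Fintype.card ι : ℚ) / 2 + 1 / 6 ≤ ∑ i, (1 - (m i : ℚ)⁻¹) := by
  by_cases hall : ∀ i, m i = 2
  · left
    simp only [hall, Finset.sum_const, Finset.card_univ, nsmul_eq_mul]
    norm_num [div_eq_mul_inv]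
  · right
    obtain ⟨j, hj⟩ := not_forall.1 hall
    have hexcess : ∀ i ∈ Finset.univ, 0 ≤ 1 / 2 - (m i : ℚ)⁻¹ := fun i _ => by
      linarith [cast_inv_le_cast_inv (by norm_num) (hm i)]
    have hexcess_j : 1 / 6 ≤ 1 / 2 - (m j : ℚ)⁻¹ := by
      linarith [cast_inv_le_cast_inv (k := 3) (by norm_num) (lt_of_le_of_ne (hm j) (Ne.symm hj))]
    have := hexcess_j.trans (Finset.single_le_sum hexcess (Finset.mem_univ j))
    simp only [Finset.sum_sub_distrib, Finset.sum_const, Finset.card_univ, nsmul_eq_mul] at this ⊢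
    linarith

end SumOverPeriods

lemma mu_le (h r : ℕ) (m : Fin r → ℕ) : mu h r m ≤ 2 * h - 2 + r := by
  have := sum_one_sub_inv_le_card m
  rw [Fintype.card_fin] at this
  unfold mu
  linarith

lemma mu_without_periods (h : ℕ) (m : Fin 0 → ℕ) : mu h 0 m = 2 * h - 2 := by
  simp [mu]

lemma mu_zero_three (m : Fin 3 → ℕ) :
    mu 0 3 m = 1 - ((m 0 : ℚ)⁻¹ + (m 1 : ℚ)⁻¹ + (m 2 : ℚ)⁻¹) := by
  simp only [mu, Fin.sum_univ_three]
  push_cast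
  ring

section SignatureMeasure

variable {h r : ℕ} {m : Fin r → ℕ}

lemma le_mu (hm : ∀ i, 2 ≤ m i) : 2 * h - 2 + (r : ℚ) / 2 ≤ mu h r m := by
  have := card_div_two_le_sum_one_sub_inv hm
  rw [Fintype.card_fin] at this
  unfold mu
  linarith

lemma mu_eq_or_ge (hm : ∀ i, 2 ≤ m i) :
    mu h r m = 2 * h - 2 + (r : ℚ) / 2 ∨ 2 * h - 2 + (r : ℚ) / 2 + 1 / 6 ≤ mu h r m := by
  unfold mu
  rcases sum_one_sub_inv_eq_or_ge hm with heq | hge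
  · left; rw [heq, Fintype.card_fin]
  · right; rw [Fintype.card_fin] at hge; linarith

lemma eq_zero_of_mu_pos_of_mu_lt_half (hm : ∀ i, 2 ≤ m i) (h0 : 0 < mu h r m)
    (h1 : mu h r m < 1 / 2) : h = 0 := by
  by_contra hne
  have hh : (1 : ℚ) ≤ h := by exact_mod_cast Nat.one_le_iff_ne_zero.2 hne
  rcases r.eq_zero_or_pos with rfl | hr
  · rw [mu_without_periods] at h0 h1
    have h2 : 2 ≤ h := by
      have : (1 : ℚ) < h := by linarith
      exact_mod_cast this
    have : (2 : ℚ) ≤ h := by exact_mod_cast h2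
    linarith
  · have : (1 : ℚ) ≤ r := by exact_mod_cast hr
    linarith [le_mu (h := h) hm]

lemma eq_three_of_mu_pos_of_mu_lt_one_sixth (hm : ∀ i, 2 ≤ m i)
    (h0 : 0 < mu 0 r m) (h1 : mu 0 r m < 1 / 6) : r = 3 := by
  have hr3 : 3 ≤ r := by
    have := mu_le 0 r m
    push_cast at this
    exact_mod_cast (by linarith : (2 : ℚ) < r)
  have hr5 : r < 5 := by
    have := le_mu (h := 0) hm
    push_cast at this
    exact_mod_cast (by linarith : (r : ℚ) < 5)
  obtain rfl | rfl : r = 3 ∨ r = 4 := by omega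
  · rfl
  · rcases mu_eq_or_ge (h := 0) hm with heq | hge
    · norm_num at heq; linarith
    · norm_num at hge; linarith

end SignatureMeasure

/-- If `0 < μ(h; m₁,…,m_r) < 1/15`, then `h = 0`, `r = 3`, and the multiset of
periods is one of `{2,3,7}`, `{2,3,8}`, `{2,4,5}`, `{2,3,9}`. -/
theorem mu_lt_one_fifteenth (h r : ℕ) (m : Fin r → ℕ)
    (hm : ∀ i, 2 ≤ m i) (h0 : 0 < mu h r m) (h1 : mu h r m < 1 / 15) :
    h = 0 ∧ r = 3 ∧
      (Multiset.map m Finset.univ.val = ({2, 3, 7} : Multiset ℕ) ∨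
       Multiset.map m Finset.univ.val = ({2, 3, 8} : Multiset ℕ) ∨
       Multiset.map m Finset.univ.val = ({2, 4, 5} : Multiset ℕ) ∨
       Multiset.map m Finset.univ.val = ({2, 3, 9} : Multiset ℕ)) := by
  obtain rfl : h = 0 := eq_zero_of_mu_pos_of_mu_lt_half hm h0 (by linarith)
  obtain rfl : r = 3 := eq_three_of_mu_pos_of_mu_lt_one_sixth hm h0 (by linarith)
  rw [mu_zero_three] at h0 h1
  exact ⟨rfl, rfl, triple_eq_of_inv_add_inv_add_inv_mem_Ioo (a := m 0) (b := m 1) (c := m 2)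
    (hm 0) (hm 1) (hm 2) (by linarith) (by linarith)⟩
end

section
/- For every integer k ≥ 1, the abelianization of the polygonal group Γ(0; 2, 3, 6k) is isomorphic to the cyclic group ℤ/6ℤ. -/
/-!
In the abelianization, write `ξ i` for the image of `xᵢ` (indexed from `0`).
From `ξ₀² = ξ₁³ = ξ₀ξ₁ξ₂ = 1` one gets `ξ₂³ = ξ₀` and `ξ₂² = ξ₁`, so the abelianization is cyclic, generated by `ξ₂`, and `ξ₂⁶ = 1`.
Conversely `xᵢ ↦ 3, 2, 1 ∈ ℤ/6` respects the relations as soon as `6 ∣ n`, so `ξ₂` has order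
exactly `6`.
-/

namespace PolygonalGroup

variable {r : ℕ} {m : Fin r → ℕ}

variable {G : Type*} [Group G]

def lift (f : Fin r → G) (hpow : ∀ i, f i ^ m i = 1) (hprod : (List.ofFn f).prod = 1) :
    PolygonalGroup r m →* G :=
  PresentedGroup.toGroup (f := f) <| by
    rintro w (⟨i, rfl⟩ | rfl)
    · simp [hpow]
    · simpa [map_list_prod, List.map_ofFn, Function.comp_def] using hprod

@[simp]
theorem lift_of (f : Fin r → G) (hpow : ∀ i, f i ^ m i = 1) (hprod : (List.ofFn f).prod = 1)
    (i : Fin r) : lift f hpow hprod (PresentedGroup.of i) = f i :=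
  PresentedGroup.toGroup.of _

end PolygonalGroup

theorem PresentedGroup.closure_range_abelianization_of {α : Type*} (rels : Set (FreeGroup α)) :
    Subgroup.closure
      (Set.range fun a => Abelianization.of (PresentedGroup.of a : PresentedGroup rels)) = ⊤ := by
  rw [Set.range_comp' Abelianization.of, ← MonoidHom.map_closure, PresentedGroup.closure_range_of,
    ← MonoidHom.range_eq_map, MonoidHom.range_eq_top]
  exact QuotientGroup.mk'_surjective _

section CommGroup

variable {G : Type*} [CommGroup G] {a b c : G}

theorem pow_three_eq_of_mul_mul_eq_one (ha : a ^ 2 = 1) (hb : b ^ 3 = 1) (habc : a * b * c = 1) :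
    c ^ 3 = a := by
  rw [eq_inv_of_mul_eq_one_right habc, inv_pow, mul_pow, hb, mul_one, pow_succ, ha, one_mul]
  exact inv_eq_of_mul_eq_one_right (by rw [← sq, ha])

theorem pow_two_eq_of_mul_mul_eq_one (ha : a ^ 2 = 1) (hb : b ^ 3 = 1) (habc : a * b * c = 1) :
    c ^ 2 = b := by
  rw [eq_inv_of_mul_eq_one_right habc, inv_pow, mul_pow, ha, one_mul]
  exact inv_eq_of_mul_eq_one_right (by rw [← pow_succ, hb])

end CommGroup

theorem orderOf_eq_of_map_eq_ofAdd_one {G : Type*} [Monoid G] {n : ℕ} {c : G} (hc : c ^ n = 1)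
    (φ : G →* Multiplicative (ZMod n)) (hφ : φ c = Multiplicative.ofAdd 1) : orderOf c = n := by
  refine Nat.dvd_antisymm (orderOf_dvd_of_pow_eq_one hc) ?_
  simpa [hφ, orderOf_ofAdd_eq_addOrderOf, ZMod.addOrderOf_one] using orderOf_map_dvd φ c

namespace PolygonalGroup

variable {n : ℕ}

local notation "ξ" i => Abelianization.of (PresentedGroup.of i : PolygonalGroup 3 ![2, 3, n])

theorem abelianization_of_pow_eq_one (i : Fin 3) : (ξ i) ^ (![2, 3, n] i) = 1 := by
  rw [← map_pow, of_pow_eq_one, map_one]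

theorem abelianization_of_mul_mul_eq_one : ((ξ 0) * (ξ 1) * (ξ 2) : Abelianization _) = 1 := by
  have h := congrArg Abelianization.of (prod_ofFn_of (m := ![2, 3, n]))
  simpa [List.ofFn_succ, mul_assoc] using h

theorem abelianization_of_two_pow_three : (ξ 2) ^ 3 = ξ 0 :=
  pow_three_eq_of_mul_mul_eq_one (abelianization_of_pow_eq_one 0)
    (abelianization_of_pow_eq_one 1) abelianization_of_mul_mul_eq_one

theorem abelianization_of_two_sq : (ξ 2) ^ 2 = ξ 1 :=
  pow_two_eq_of_mul_mul_eq_one (abelianization_of_pow_eq_one 0)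
    (abelianization_of_pow_eq_one 1) abelianization_of_mul_mul_eq_one

theorem abelianization_of_two_pow_six : (ξ 2) ^ 6 = 1 := by
  rw [show 6 = 3 * 2 by rfl, pow_mul, abelianization_of_two_pow_three]
  exact abelianization_of_pow_eq_one 0

theorem abelianization_zpowers_of_two_eq_top : Subgroup.zpowers (ξ 2) = ⊤ := by
  rw [eq_top_iff, ← PresentedGroup.closure_range_abelianization_of, Subgroup.closure_le]
  rintro _ ⟨i, rfl⟩
  fin_cases i
  · exact ⟨3, by simpa using abelianization_of_two_pow_three⟩
  · exact ⟨2, by simpa using abelianization_of_two_sq⟩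
  · exact Subgroup.mem_zpowers _

def abelianizationToZMod (hn : 6 ∣ n) :
    Abelianization (PolygonalGroup 3 ![2, 3, n]) →* Multiplicative (ZMod 6) :=
  Abelianization.lift <| lift ![.ofAdd 3, .ofAdd 2, .ofAdd 1]
    (by
      intro i
      fin_cases i
      · rfl
      · rfl
      · simp [← ofAdd_nsmul, (ZMod.natCast_eq_zero_iff n 6).2 hn])
    (by decide)

theorem orderOf_abelianization_of_two (hn : 6 ∣ n) : orderOf (ξ 2) = 6 :=
  orderOf_eq_of_map_eq_ofAdd_one abelianization_of_two_pow_six (abelianizationToZMod hn) <| by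
    simp [abelianizationToZMod]

noncomputable def abelianizationMulEquiv (hn : 6 ∣ n) :
    Multiplicative (ZMod 6) ≃* Abelianization (PolygonalGroup 3 ![2, 3, n]) :=
  have hgen : ∀ g, g ∈ Subgroup.zpowers (ξ 2) :=
    fun g => abelianization_zpowers_of_two_eq_top ▸ Subgroup.mem_top g
  zmodMulEquivOfGenerator hgen <| by
    rw [← orderOf_eq_card_of_forall_mem_zpowers hgen, orderOf_abelianization_of_two hn]

end PolygonalGroup

theorem abelianization_polygonal_2_3_6k_general (k : ℕ) :
    Nonempty (Abelianization (PolygonalGroup 3 ![2, 3, 6 * k]) ≃*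
      Multiplicative (ZMod 6)) :=
  ⟨(PolygonalGroup.abelianizationMulEquiv (dvd_mul_right 6 k)).symm⟩

/-- For every `k ≥ 1`, the abelianization of `Γ(0; 2, 3, 6k)` is cyclic of
order `6`. -/
theorem abelianization_polygonal_2_3_6k (k : ℕ) (hk : 1 ≤ k) :
    Nonempty (Abelianization (PolygonalGroup 3 ![2, 3, 6 * k]) ≃*
      Multiplicative (ZMod 6)) :=
  abelianization_polygonal_2_3_6k_general k
end
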